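/- arXiv:2408.06770 — 8 statements merged into one kernel-verified Lean document; each statement's English description precedes it below -/
import Mathlib

section
/- If G is a graph with a path factor 𝒫, then for every subset 𝒩 ⊆ 𝒫, every connected component of the graph obtained from G by deleting the vertices of all paths in 𝒩 contains a positive even number of endvertices of paths in 𝒫. -/
/-- Reachability along a walk whose support avoids `S`. -/
lemma reach_of_walk {V : Type*} {G : SimpleGraph V} {S : Set V} {a b : V} (w : G.Walk a b)
    (h : ∀ x ∈ w.support, x ∉ S) {x : V} (hx : x ∈ w.support) :
    Relation.ReflTransGen (fun x y => x ∉ S ∧ y ∉ S ∧ G.Adj x y) a x := by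
  induction w with
  | nil =>
    simp only [SimpleGraph.Walk.support_nil, List.mem_singleton] at hx
    subst hx; exact Relation.ReflTransGen.refl
  | @cons a u b adj w ih =>
    rw [SimpleGraph.Walk.support_cons, List.mem_cons] at hx
    rcases hx with rfl | hx
    · exact Relation.ReflTransGen.refl
    · refine Relation.ReflTransGen.head ⟨?_, ?_, adj⟩ (ih (fun y hy => h y ?_) hx)
      · exact h a (by simp)
      · exact h u (by simp)
      · rw [SimpleGraph.Walk.support_cons]; exact List.mem_cons_of_mem _ hy

/-- A nontrivial path has distinct endpoints. -/
lemma path_start_ne_end {V : Type*} {G : SimpleGraph V} {u v : V} {w : G.Walk u v}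
    (hp : w.IsPath) (hl : 1 ≤ w.length) : u ≠ v := by
  intro h; subst h
  cases w with
  | nil => simp at hl
  | cons adj w' =>
    rw [SimpleGraph.Walk.cons_isPath_iff] at hp
    exact hp.2 w'.end_mem_support


open SimpleGraph

/-- A path cover (path factor) of `G`: pairwise vertex-disjoint paths, each on at
least two vertices, covering all vertices. -/
def SimpleGraph.IsPathCover {V : Type*} (G : SimpleGraph V)
    (F : Set (Σ u v : V, G.Walk u v)) : Prop :=
  (∀ p ∈ F, p.2.2.IsPath ∧ 1 ≤ p.2.2.length) ∧
  (∀ p ∈ F, ∀ q ∈ F, p ≠ q → ∀ x, x ∈ p.2.2.support → x ∉ q.2.2.support) ∧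
  (∀ v : V, ∃ p ∈ F, v ∈ p.2.2.support)

/-- The set of endvertices of the paths of a path cover. -/
def SimpleGraph.pcEnds {V : Type*} (G : SimpleGraph V)
    (F : Set (Σ u v : V, G.Walk u v)) : Set V :=
  {x | ∃ p ∈ F, p.1 = x ∨ p.2.1 = x}

/-- If `G` has a path factor `F`, then for every `N ⊆ F`, every connected component of
`G` minus the vertices of the paths in `N` contains a positive even number of
endvertices of paths in `F`.  The component of a vertex `v ∉ S` is described by
reflexive-transitive closure of adjacency outside `S`. -/
theorem stmt1 {V : Type*} [Fintype V] (G : SimpleGraph V)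
    (F : Set (Σ u v : V, G.Walk u v)) (hF : G.IsPathCover F)
    (N : Set (Σ u v : V, G.Walk u v)) (hN : N ⊆ F)
    (S : Set V) (hS : S = {x | ∃ p ∈ N, x ∈ p.2.2.support})
    (v : V) (hv : v ∉ S) :
    0 < ({w | Relation.ReflTransGen (fun x y => x ∉ S ∧ y ∉ S ∧ G.Adj x y) v w}
          ∩ G.pcEnds F).ncard ∧
    Even ({w | Relation.ReflTransGen (fun x y => x ∉ S ∧ y ∉ S ∧ G.Adj x y) v w}
          ∩ G.pcEnds F).ncard := by
  classical
  obtain ⟨hpath, hdisj, hcover⟩ := hF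
  set R := fun x y => x ∉ S ∧ y ∉ S ∧ G.Adj x y with hRdef
  set C : Set V := {w | Relation.ReflTransGen R v w} with hCdef
  -- every element of C is outside S
  have hCnotS : ∀ w ∈ C, w ∉ S := by
    intro w hw
    induction hw with
    | refl => exact hv
    | tail _ h _ => exact h.2.1
  -- reachability is symmetric
  have hsymm : Symmetric (Relation.ReflTransGen R) :=
    fun a b h => (@Relation.ReflTransGen.stdSymm _ R ⟨fun x y h => ⟨h.2.1, h.1, h.2.2.symm⟩⟩).symm a b h
  -- paths not in N avoid S
  have hsupS : ∀ p ∈ F, p ∉ N → ∀ x ∈ p.2.2.support, x ∉ S := by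
    intro p hpF hpN x hx hxS
    rw [hS] at hxS
    obtain ⟨q, hqN, hxq⟩ := hxS
    exact hdisj p hpF q (hN hqN) (fun h => hpN (h ▸ hqN)) x hx hxq
  -- key: if a vertex of a path is in C, both endpoints are in C
  have hkey : ∀ p ∈ F, ∀ x ∈ p.2.2.support, x ∈ C → p.1 ∈ C ∧ p.2.1 ∈ C := by
    intro p hpF x hx hxC
    have hpN : p ∉ N := by
      intro hpN
      exact hCnotS x hxC (hS ▸ ⟨p, hpN, hx⟩)
    have havoid := hsupS p hpF hpN
    have h1 : Relation.ReflTransGen R p.1 x := reach_of_walk p.2.2 havoid hx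
    have h2 : Relation.ReflTransGen R p.1 p.2.1 :=
      reach_of_walk p.2.2 havoid p.2.2.end_mem_support
    have hp1 : p.1 ∈ C := Relation.ReflTransGen.trans hxC (hsymm h1)
    exact ⟨hp1, Relation.ReflTransGen.trans hp1 h2⟩
  set T : Set (Σ u v : V, G.Walk u v) := {p | p ∈ F ∧ p.1 ∈ C} with hTdef
  -- the set of endvertices in C is the union of the two endpoint images of T
  have hE : C ∩ G.pcEnds F = (fun p => p.1) '' T ∪ (fun p : Σ u v : V, G.Walk u v => p.2.1) '' T := by
    ext w
    constructor
    · rintro ⟨hwC, p, hpF, hw⟩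
      have hwsup : w ∈ p.2.2.support := by
        rcases hw with rfl | rfl
        · exact p.2.2.start_mem_support
        · exact p.2.2.end_mem_support
      have hpT : p ∈ T := ⟨hpF, (hkey p hpF w hwsup hwC).1⟩
      rcases hw with rfl | rfl
      · exact Or.inl ⟨p, hpT, rfl⟩
      · exact Or.inr ⟨p, hpT, rfl⟩
    · rintro (⟨p, ⟨hpF, hp1⟩, rfl⟩ | ⟨p, ⟨hpF, hp1⟩, rfl⟩)
      · exact ⟨hp1, p, hpF, Or.inl rfl⟩
      · exact ⟨(hkey p hpF p.1 p.2.2.start_mem_support hp1).2, p, hpF, Or.inr rfl⟩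
  -- endpoints are injective on T and the two images are disjoint
  have hinj1 : Set.InjOn (fun p : Σ u v : V, G.Walk u v => p.1) T := by
    intro p hp q hq h
    by_contra hne
    have h' : p.1 = q.1 := h
    exact hdisj p hp.1 q hq.1 hne p.1 p.2.2.start_mem_support
      (by rw [h']; exact q.2.2.start_mem_support)
  have hinj2 : Set.InjOn (fun p : Σ u v : V, G.Walk u v => p.2.1) T := by
    intro p hp q hq h
    by_contra hne
    have h' : p.2.1 = q.2.1 := h
    exact hdisj p hp.1 q hq.1 hne p.2.1 p.2.2.end_mem_support
      (by rw [h']; exact q.2.2.end_mem_support)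
  have hdisjim : Disjoint ((fun p : Σ u v : V, G.Walk u v => p.1) '' T)
      ((fun p : Σ u v : V, G.Walk u v => p.2.1) '' T) := by
    rw [Set.disjoint_left]
    rintro w ⟨p, hpT, rfl⟩ ⟨q, hqT, hq⟩
    by_cases hpq : p = q
    · subst hpq
      exact path_start_ne_end (hpath p hpT.1).1 (hpath p hpT.1).2 hq.symm
    · have hq' : q.2.1 = p.1 := hq
      exact hdisj p hpT.1 q hqT.1 hpq p.1 p.2.2.start_mem_support
        (by rw [← hq']; exact q.2.2.end_mem_support)
  -- T is finite and nonempty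
  have hTfin : T.Finite :=
    Set.Finite.of_finite_image (Set.toFinite _) hinj1
  have hTne : T.Nonempty := by
    obtain ⟨p, hpF, hvp⟩ := hcover v
    exact ⟨p, hpF, (hkey p hpF v hvp Relation.ReflTransGen.refl).1⟩
  have hcard : (C ∩ G.pcEnds F).ncard = T.ncard + T.ncard := by
    rw [hE, Set.ncard_union_eq hdisjim (Set.toFinite _) (Set.toFinite _),
      Set.ncard_image_of_injOn hinj1, Set.ncard_image_of_injOn hinj2]
  constructor
  · rw [hcard]
    have := (Set.ncard_pos hTfin).2 hTne
    omega
  · rw [hcard]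
    exact Even.add_self _
end

section
/- Let G be a graph with no path factor and H a graph with a vertex of degree one. Then the Cartesian product G □ H is not hamiltonian. -/
set_option linter.unnecessarySimpa false

open SimpleGraph List

def walkOfChain {V : Type*} (G : SimpleGraph V) :
    (l : List V) → l.Chain' G.Adj → (h : l ≠ []) → G.Walk (l.head h) (l.getLast h)
  | [a], _, _ => Walk.nil
  | _ :: b :: t, hc, _ =>
      Walk.cons (List.isChain_cons_cons.mp hc).1 (walkOfChain G (b :: t) (List.isChain_cons_cons.mp hc).2 (by simp))

theorem walkOfChain_support {V : Type*} (G : SimpleGraph V) :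
    ∀ (l : List V) (hc : l.Chain' G.Adj) (h : l ≠ []),
      (walkOfChain G l hc h).support = l
  | [a], _, _ => rfl
  | a :: b :: t, hc, h => by
      exact congrArg (List.cons a) (walkOfChain_support G (b :: t) _ _)

theorem no_aba {α : Type*} {l : List α} {x₀ : α} (hhd : l.head? = some x₀)
    (hnd : l.tail.Nodup) (hlast : l.getLast? = some x₀) (hlen : 4 ≤ l.length) :
    ∀ (s t : List α) (a b : α), l = s ++ a :: b :: a :: t → False := by
  intro s t a b hl
  match s with
  | [] =>
    simp only [List.nil_append] at hl
    subst hl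
    simp only [List.head?_cons, Option.some.injEq] at hhd
    subst hhd
    match t with
    | [] => simp at hlen
    | c :: t'' =>
      have h1 : (c :: t'').getLast? = some a := by
        simpa [List.getLast?_cons_cons] using hlast
      have h2 : a ∈ c :: t'' := List.mem_of_getLast? h1
      simp only [List.tail_cons] at hnd
      exact (List.nodup_cons.mp hnd.of_cons).1 h2
  | y :: s' =>
    have h1 : [a, b, a] <+ l.tail := by
      rw [hl]
      simp only [List.cons_append, List.tail_cons]
      simpa [List.append_assoc] using (List.infix_append s' [a,b,a] t).sublist
    have := hnd.sublist h1
    simp at this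

theorem runs_exists {α : Type*} {R : α → α → Prop} {P : α → Bool} (l₀ : List α)
    (hchain : l₀.Chain' R)
    (H3 : ∀ a b c, [a, b, c] <:+: l₀ → P b → P a ∨ P c)
    (hlast : ∀ x, l₀.getLast? = some x → ¬ P x) :
    ∀ (n : ℕ) (s : List α), s.length ≤ n → s <:+ l₀ →
    (∀ x, s.head? = some x → P x → ∃ p, ¬ (P p = true) ∧ (p :: s) <:+ l₀) →
    ∃ L : List (List α),
      (∀ r ∈ L, r.Chain' R ∧ 2 ≤ r.length ∧ ∀ x ∈ r, P x) ∧
      L.flatten <+ s ∧ (∀ x ∈ s, P x → x ∈ L.flatten) := by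
  intro n
  induction n with
  | zero =>
    intro s hlen _ _
    have : s = [] := List.eq_nil_of_length_eq_zero (Nat.le_zero.mp hlen)
    subst this
    exact ⟨[], by simp, by simp, by simp⟩
  | succ n ih =>
    intro s hlen hsuf hinv
    match s with
    | [] => exact ⟨[], by simp, by simp, by simp⟩
    | a :: t =>
      by_cases ha : P a = true
      · -- start of a run
        obtain ⟨p, hp, hpre⟩ := hinv a rfl ha
        -- t is nonempty and its head satisfies P
        match t with
        | [] =>
          exfalso
          obtain ⟨pre, hpre'⟩ := hsuf
          exact hlast a (by rw [← hpre']; simp) ha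
        | b :: t' =>
          have hPb : P b = true := by
            by_contra hb
            have hinf : [p, a, b] <:+: l₀ := by
              obtain ⟨u, hu⟩ := hpre
              exact ⟨u, t', by simpa using hu⟩
            rcases H3 p a b hinf ha with h | h
            · exact hp h
            · exact hb h
          -- the run
          set run := a :: (b :: t').takeWhile P with hrun
          set rest := (b :: t').dropWhile P with hrest
          clear_value run rest
          have hrestlen : rest.length ≤ n := by
            have h1 := (List.dropWhile_sublist (l := b :: t') P).length_le
            rw [← hrest] at h1
            have h2 : (b :: t').length = t'.length + 1 := rfl
            have h3 : (a :: b :: t').length = t'.length + 2 := rfl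
            omega
          have hrestsuf : rest <:+ l₀ := by
            rw [hrest]
            exact (List.dropWhile_suffix P).trans ((List.suffix_cons a (b :: t')).trans hsuf)
          have hrestinv : ∀ x, rest.head? = some x → P x → ∃ p, ¬ (P p = true) ∧ (p :: rest) <:+ l₀ := by
            intro x hx hPx
            have hd := List.head?_dropWhile_not P (b :: t')
            rw [← hrest, hx] at hd
            simp at hd
            simp [hd] at hPx
          obtain ⟨L', hL', hsub', hcov'⟩ := ih rest hrestlen hrestsuf hrestinv
          refine ⟨run :: L', ?_, ?_, ?_⟩
          · intro r hr
            rcases List.mem_cons.mp hr with rfl | hr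
            · refine ⟨?_, ?_, ?_⟩
              · refine hchain.infix ?_
                have h1 : r <+: a :: b :: t' := by
                  rw [hrun]
                  exact List.cons_prefix_cons.mpr ⟨rfl, List.takeWhile_prefix P⟩
                exact h1.isInfix.trans hsuf.isInfix
              · rw [hrun, List.takeWhile_cons_of_pos hPb]; simp
              · intro x hx
                rw [hrun] at hx
                rcases List.mem_cons.mp hx with rfl | hx
                · exact ha
                · exact List.mem_takeWhile_imp hx
            · exact hL' r hr
          · have hdecomp : run ++ rest = a :: b :: t' := by
              rw [hrun, hrest]; simp [List.takeWhile_append_dropWhile]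
            calc (run :: L').flatten = run ++ L'.flatten := by simp
              _ <+ run ++ rest := (List.Sublist.refl run).append hsub'
              _ = a :: b :: t' := hdecomp
          · intro x hx hPx
            have : x ∈ run ++ rest := by
              rw [hrun, hrest]; simpa [List.takeWhile_append_dropWhile] using hx
            rcases List.mem_append.mp this with h | h
            · simp only [List.flatten_cons, List.mem_append]; exact Or.inl h
            · simp only [List.flatten_cons, List.mem_append]; exact Or.inr (hcov' x h hPx)
      · -- skip a
        have htsuf : t <:+ l₀ := (List.suffix_cons a t).trans hsuf
        have htinv : ∀ x, t.head? = some x → P x → ∃ p, ¬ (P p = true) ∧ (p :: t) <:+ l₀ :=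
          fun x hx hPx => ⟨a, ha, hsuf⟩
        obtain ⟨L, hL, hsub, hcov⟩ := ih t (by simp at hlen; omega) htsuf htinv
        refine ⟨L, hL, hsub.trans (List.sublist_cons_self a t), ?_⟩
        intro x hx hPx
        rcases List.mem_cons.mp hx with rfl | hx
        · exact absurd hPx ha
        · exact hcov x hx hPx

theorem chain'_imp_mem {α : Type*} {R S : α → α → Prop} :
    ∀ {l : List α}, (∀ a ∈ l, ∀ b ∈ l, R a b → S a b) → l.Chain' R → l.Chain' S
  | [], _, _ => List.isChain_nil
  | [_], _, _ => List.isChain_singleton _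
  | a :: b :: t, h, hc => by
      simp only [List.Chain', List.isChain_cons_cons] at hc ⊢
      exact ⟨h a (by simp) b (by simp) hc.1,
        chain'_imp_mem (fun x hx y hy => h x (List.mem_cons_of_mem _ hx) y (List.mem_cons_of_mem _ hy)) hc.2⟩

/-- If `G` has no path factor and `H` has a vertex of degree one, then the
Cartesian product `G □ H` is not hamiltonian. -/
theorem stmt3 {V W : Type*} [Fintype V] [Fintype W] [DecidableEq V] [DecidableEq W]
    (G : SimpleGraph V) (H : SimpleGraph W)
    (hG : ¬ ∃ F : Set (Σ u v : V, G.Walk u v), G.IsPathCover F)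
    (hH : ∃ u : W, ∃! w : W, H.Adj u w) :
    ¬ (G □ H).IsHamiltonian := by
  intro hHam
  obtain ⟨u, w, huw, huniq⟩ := hH
  by_cases hV : IsEmpty V
  · refine hG ⟨∅, ?_, ?_, ?_⟩
    · simp
    · simp
    · exact fun v => (hV.false v).elim
  · rw [not_isEmpty_iff] at hV
    obtain ⟨v₀⟩ := hV
    have hne : u ≠ w := H.ne_of_adj huw
    have hcard : Fintype.card (V × W) ≠ 1 := by
      have h1 : 2 ≤ Fintype.card W := Fintype.one_lt_card_iff_nontrivial.mpr ⟨⟨u, w, hne⟩⟩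
      have h2 : 1 ≤ Fintype.card V := Fintype.card_pos_iff.mpr ⟨v₀⟩
      rw [Fintype.card_prod]
      nlinarith
    obtain ⟨a₀, c, hc⟩ := hHam hcard
    set x₀ : V × W := (v₀, w) with hx₀def
    have hx₀ : x₀ ∈ c.support := hc.mem_support x₀
    set c' := c.rotate x₀ hx₀ with hc'def
    have hcyc : c'.IsCycle := hc.isCycle.rotate hx₀
    have hmem : ∀ y : V × W, y ∈ c'.support := by
      intro y
      have h1 : y ∈ c.support.tail := by
        have h2 := hc.isHamiltonian_tail.mem_support y
        rwa [Walk.support_tail_of_not_nil c hc.isCycle.not_nil] at h2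
      have h2 := (SimpleGraph.Walk.support_rotate c x₀ hx₀).mem_iff (a := y)
      exact List.mem_of_mem_tail (h2.mpr h1)
    set l := c'.support with hldef
    have hchain : l.Chain' (G □ H).Adj := c'.isChain_adj_support
    have hhd : l.head? = some x₀ := by rw [hldef, Walk.support_eq_cons]; rfl
    have hlnd : l.tail.Nodup := hcyc.support_nodup
    have hl' : l = x₀ :: l.tail := by rw [hldef]; exact Walk.support_eq_cons c'
    have hlast : l.getLast? = some x₀ := by
      rw [hldef, List.getLast?_eq_getLast (c'.support_ne_nil), c'.getLast_support]
    have hlen4 : 4 ≤ l.length := by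
      have h1 := hcyc.three_le_length
      rw [hldef, Walk.length_support]
      omega
    set P : V × W → Bool := fun p => decide (p.2 = u) with hPdef
    have hPx₀ : ¬ P x₀ = true := by simp [hPdef, hx₀def]; exact fun h => hne h.symm
    have hlastP : ∀ x, l.getLast? = some x → ¬ P x = true := by
      intro x hx
      rw [hlast] at hx
      obtain rfl : x₀ = x := Option.some.inj hx
      exact hPx₀
    have H3 : ∀ a b cc, [a, b, cc] <:+: l → P b → P a ∨ P cc := by
      intro a b cc hinf hPb
      by_contra hcon
      push_neg at hcon
      obtain ⟨hPa, hPc⟩ := hcon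
      have hch : List.Chain' (G □ H).Adj [a, b, cc] := hchain.infix hinf
      have hab : (G □ H).Adj a b := (List.isChain_cons_cons.mp hch).1
      have hbc : (G □ H).Adj b cc := (List.isChain_cons_cons.mp (List.isChain_cons_cons.mp hch).2).1
      have hbu : b.2 = u := by simpa [hPdef] using hPb
      have hau : a.2 ≠ u := by simpa [hPdef] using hPa
      have hcu : cc.2 ≠ u := by simpa [hPdef] using hPc
      have ha' : a = (b.1, w) := by
        rcases SimpleGraph.boxProd_adj.mp hab with ⟨_, h2⟩ | ⟨hh, h1⟩
        · exact absurd (h2.trans hbu) hau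
        · have h3 : H.Adj u a.2 := by rw [← hbu]; exact hh.symm
          exact Prod.ext h1 (huniq a.2 h3)
      have hc' : cc = (b.1, w) := by
        rcases SimpleGraph.boxProd_adj.mp hbc with ⟨_, h2⟩ | ⟨hh, h1⟩
        · exact absurd (hbu ▸ h2.symm) hcu
        · have h3 : H.Adj u cc.2 := by rw [← hbu]; exact hh
          exact Prod.ext h1.symm (huniq cc.2 h3)
      obtain ⟨s, t, hst⟩ := hinf
      exact no_aba hhd hlnd hlast hlen4 s t a b (by rw [← hst, ha', hc']; simp)
    have hinv0 : ∀ x, l.head? = some x → P x → ∃ p, ¬ (P p = true) ∧ (p :: l) <:+ l := by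
      intro x hx hPx
      rw [hhd] at hx
      obtain rfl : x₀ = x := Option.some.inj hx
      exact absurd hPx hPx₀
    obtain ⟨L, hL, hsub, hcov⟩ := runs_exists (R := (G □ H).Adj) l hchain H3 hlastP
      l.length l le_rfl (List.suffix_refl l) hinv0
    have hflatP : ∀ x ∈ L.flatten, P x = true := by
      intro x hx
      obtain ⟨r, hr, hxr⟩ := List.mem_flatten.mp hx
      exact (hL r hr).2.2 x hxr
    have hsubtail : L.flatten <+ l.tail := by
      rcases List.sublist_cons_iff.mp (hl' ▸ hsub) with h | ⟨r, hr, _⟩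
      · exact h
      · exfalso
        have h1 : x₀ ∈ L.flatten := by rw [hr]; simp
        exact hPx₀ (hflatP _ h1)
    have hflatnd : L.flatten.Nodup := hlnd.sublist hsubtail
    obtain ⟨hndr, hpw⟩ := List.nodup_flatten.mp hflatnd
    have hsnd : ∀ r ∈ L, ∀ x ∈ r, x.2 = u := fun r hr x hx => by
      simpa [hPdef] using (hL r hr).2.2 x hx
    have hchainr : ∀ r ∈ L, (r.map Prod.fst).Chain' G.Adj := by
      intro r hr
      simp only [List.Chain', List.isChain_map]
      refine chain'_imp_mem ?_ (hL r hr).1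
      intro x hx y hy hadj
      rcases SimpleGraph.boxProd_adj.mp hadj with ⟨hg, _⟩ | ⟨hh, _⟩
      · exact hg
      · exfalso
        rw [hsnd r hr x hx, hsnd r hr y hy] at hh
        exact H.loopless.irrefl u hh
    have hner : ∀ r ∈ L, r.map Prod.fst ≠ [] := by
      intro r hr h
      have h1 := (hL r hr).2.1
      rw [List.map_eq_nil_iff] at h
      subst h
      simp at h1
    refine hG ⟨Set.range (fun rr : {r // r ∈ L} =>
      ⟨_, _, walkOfChain G (rr.1.map Prod.fst) (hchainr rr.1 rr.2) (hner rr.1 rr.2)⟩), ?_, ?_, ?_⟩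
    · rintro p ⟨rr, rfl⟩
      beta_reduce
      constructor
      · rw [SimpleGraph.Walk.isPath_def, walkOfChain_support]
        refine List.Nodup.map_on ?_ (hndr rr.1 rr.2)
        intro x hx y hy hxy
        exact Prod.ext hxy ((hsnd rr.1 rr.2 x hx).trans (hsnd rr.1 rr.2 y hy).symm)
      · have h1 := (hL rr.1 rr.2).2.1
        have h2 := Walk.length_support
          (walkOfChain G (rr.1.map Prod.fst) (hchainr rr.1 rr.2) (hner rr.1 rr.2))
        rw [walkOfChain_support, List.length_map] at h2
        change 1 ≤ (walkOfChain G _ _ _).length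
        omega
    · rintro p ⟨rr, rfl⟩ q ⟨ss, rfl⟩ hpq x hxp hxq
      have hrs : rr.1 ≠ ss.1 := by
        intro h
        apply hpq
        congr 1
        exact Subtype.ext h
      rw [walkOfChain_support] at hxp hxq
      obtain ⟨e1, he1, he1x⟩ := List.mem_map.mp hxp
      obtain ⟨e2, he2, he2x⟩ := List.mem_map.mp hxq
      have he : e1 = e2 :=
        Prod.ext (he1x.trans he2x.symm) ((hsnd _ rr.2 _ he1).trans (hsnd _ ss.2 _ he2).symm)
      subst he
      have hdisj : List.Disjoint rr.1 ss.1 :=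
        by haveI : Std.Symm (@List.Disjoint (V × W)) := ⟨fun a b h => List.Disjoint.symm h⟩; exact hpw.forall rr.2 ss.2 hrs
      exact hdisj he1 he2
    · intro v
      have hvl : ((v, u) : V × W) ∈ l := hmem (v, u)
      have h1 : (v, u) ∈ L.flatten := hcov _ hvl (by simp [hPdef])
      obtain ⟨r, hr, hxr⟩ := List.mem_flatten.mp h1
      refine ⟨⟨_, _, walkOfChain G (r.map Prod.fst) (hchainr r hr) (hner r hr)⟩,
        ⟨⟨r, hr⟩, rfl⟩, ?_⟩
      rw [walkOfChain_support]
      exact List.mem_map.mpr ⟨(v, u), hxr, rfl⟩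
end

section
/- There is no path cover 𝒫 of the grid graph P₃ □ Pₙ such that (2,k) is an endvertex of a path in 𝒫 for some odd k, and every endvertex of every path in 𝒫 lies in the set {2} × {k, k+1, ..., n} (i.e., all endvertices are in the middle row at positions at least k). -/
open SimpleGraph

namespace PCAux

variable {V : Type*} {G : SimpleGraph V}

/-- In a path, the start vertex is incident to at most one edge. -/
lemma end_unique {u v a b : V} (w : G.Walk u v) (hw : w.IsPath)
    (ha : s(u, a) ∈ w.edges) (hb : s(u, b) ∈ w.edges) : a = b := by
  induction w with
  | nil => simp at ha
  | @cons x y z hadj p ih =>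
    rw [Walk.cons_isPath_iff] at hw
    rw [Walk.edges_cons, List.mem_cons] at ha hb
    have key : ∀ c : V, s(x, c) ∈ p.edges → False := fun c hc =>
      hw.2 (Walk.fst_mem_support_of_mem_edges p hc)
    have hxy : x ≠ y := G.ne_of_adj hadj
    rcases ha with ha | ha
    · rcases hb with hb | hb
      · rw [Sym2.eq_iff] at ha hb
        rcases ha with ⟨_, ha⟩ | ⟨h1, _⟩
        · rcases hb with ⟨_, hb⟩ | ⟨h1, _⟩
          · rw [ha, hb]
          · exact absurd h1 hxy
        · exact absurd h1 hxy
      · exact absurd hb (key b)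
    · exact absurd ha (key a)

/-- In a path, no vertex is incident to three distinct edges. -/
lemma no_three {u v x a b c : V} (w : G.Walk u v) (hw : w.IsPath)
    (hab : a ≠ b) (hac : a ≠ c) (hbc : b ≠ c)
    (ha : s(x, a) ∈ w.edges) (hb : s(x, b) ∈ w.edges) (hc : s(x, c) ∈ w.edges) : False := by
  induction w with
  | nil => simp at ha
  | @cons p q r hadj w' ih =>
    rw [Walk.cons_isPath_iff] at hw
    rw [Walk.edges_cons, List.mem_cons] at ha hb hc
    have hpq : p ≠ q := G.ne_of_adj hadj
    have hfst : ∀ d : V, s(x, d) = s(p, q) → (x = p ∧ d = q) ∨ (x = q ∧ d = p) := by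
      intro d hd; rw [Sym2.eq_iff] at hd; tauto
    rcases ha with ha | ha
    · rcases hb with hb | hb
      · rcases hfst a ha with ⟨hx1, ha'⟩ | ⟨hx1, ha'⟩ <;>
          rcases hfst b hb with ⟨hx2, hb'⟩ | ⟨hx2, hb'⟩ <;>
          first
            | exact hab (ha'.trans hb'.symm)
            | exact hpq (hx1.symm.trans hx2)
            | exact hpq (hx2.symm.trans hx1)
      · rcases hc with hc | hc
        · rcases hfst a ha with ⟨hx1, ha'⟩ | ⟨hx1, ha'⟩ <;>
            rcases hfst c hc with ⟨hx2, hc'⟩ | ⟨hx2, hc'⟩ <;>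
            first
              | exact hac (ha'.trans hc'.symm)
              | exact hpq (hx1.symm.trans hx2)
              | exact hpq (hx2.symm.trans hx1)
        · rcases hfst a ha with ⟨hx, _⟩ | ⟨hx, _⟩
          · exact hw.2 (hx ▸ Walk.fst_mem_support_of_mem_edges w' hb)
          · subst hx; exact hbc (end_unique w' hw.1 hb hc)
    · rcases hb with hb | hb
      · rcases hc with hc | hc
        · rcases hfst b hb with ⟨hx1, hb'⟩ | ⟨hx1, hb'⟩ <;>
            rcases hfst c hc with ⟨hx2, hc'⟩ | ⟨hx2, hc'⟩ <;>
            first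
              | exact hbc (hb'.trans hc'.symm)
              | exact hpq (hx1.symm.trans hx2)
              | exact hpq (hx2.symm.trans hx1)
        · rcases hfst b hb with ⟨hx, _⟩ | ⟨hx, _⟩
          · exact hw.2 (hx ▸ Walk.fst_mem_support_of_mem_edges w' ha)
          · subst hx; exact hac (end_unique w' hw.1 ha hc)
      · rcases hc with hc | hc
        · rcases hfst c hc with ⟨hx, _⟩ | ⟨hx, _⟩
          · exact hw.2 (hx ▸ Walk.fst_mem_support_of_mem_edges w' ha)
          · subst hx; exact hab (end_unique w' hw.1 ha hb)
        · exact ih hw.1 ha hb hc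

/-- An interior vertex of a path is incident to two distinct edges. -/
lemma interior_two {u v x : V} (w : G.Walk u v) (hw : w.IsPath)
    (hx : x ∈ w.support) (hxu : x ≠ u) (hxv : x ≠ v) :
    ∃ a b : V, a ≠ b ∧ s(x, a) ∈ w.edges ∧ s(x, b) ∈ w.edges := by
  induction w with
  | nil =>
    simp only [Walk.support_nil, List.mem_singleton] at hx
    exact absurd hx hxu
  | @cons p q r hadj w' ih =>
    rw [Walk.support_cons, List.mem_cons] at hx
    rw [Walk.cons_isPath_iff] at hw
    rcases hx with hx | hx
    · exact absurd hx hxu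
    · by_cases hq : x = q
      · subst hq
        cases w' with
        | nil => exact absurd rfl hxv
        | @cons _ y _ hadj2 w'' =>
          refine ⟨p, y, ?_, ?_, ?_⟩
          · intro hpy
            apply hw.2
            rw [Walk.support_cons, List.mem_cons]
            right
            rw [hpy]
            exact Walk.start_mem_support w''
          · rw [Walk.edges_cons, List.mem_cons]
            exact Or.inl Sym2.eq_swap
          · rw [Walk.edges_cons, List.mem_cons]
            right
            rw [Walk.edges_cons, List.mem_cons]
            exact Or.inl rfl
      · obtain ⟨a, b, hab, ha, hb⟩ := ih hw.1 hx hq hxv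
        exact ⟨a, b, hab, List.mem_cons_of_mem _ ha, List.mem_cons_of_mem _ hb⟩



/-- vertex constructor for the 3×n grid -/
def vx (n : ℕ) (hn : 0 < n) (a i : ℕ) : Fin 3 × Fin n :=
  (⟨a % 3, Nat.mod_lt a (by norm_num)⟩, ⟨i % n, Nat.mod_lt i hn⟩)

lemma vx_eq_iff {n : ℕ} (hn : 0 < n) {a i b j : ℕ} (ha : a < 3) (hi : i < n)
    (hb : b < 3) (hj : j < n) : vx n hn a i = vx n hn b j ↔ (a = b ∧ i = j) := by
  simp [vx, Prod.ext_iff, Fin.ext_iff, Nat.mod_eq_of_lt, ha, hi, hb, hj]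

lemma core (n k : ℕ) (hn : 0 < n) (hkn : k < n) (hke : Even k)
    (U : (Fin 3 × Fin n) → (Fin 3 × Fin n) → Prop)
    (Usymm : ∀ u v, U u v → U v u)
    (Uadj : ∀ u v, U u v → (pathGraph 3 □ pathGraph n).Adj u v)
    (Hint : ∀ v : Fin 3 × Fin n, ¬(v.1 = (1 : Fin 3) ∧ k ≤ v.2.val) →
      ∃ a b, a ≠ b ∧ U v a ∧ U v b)
    (Hmax : ∀ v a b c : Fin 3 × Fin n, a ≠ b → a ≠ c → b ≠ c →
      U v a → U v b → U v c → False)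
    (Hend : ∀ a b, U (vx n hn 1 k) a → U (vx n hn 1 k) b → a = b) : False := by
  set v : ℕ → ℕ → Fin 3 × Fin n := vx n hn with hv
  -- value-level equality
  have veq : ∀ {a i b j : ℕ}, a < 3 → i < n → b < 3 → j < n →
      (v a i = v b j ↔ (a = b ∧ i = j)) := fun ha hi hb hj => vx_eq_iff hn ha hi hb hj
  -- neighbour characterization
  have hnbr : ∀ a i (x : Fin 3 × Fin n), a < 3 → i < n → U (v a i) x →
      ∃ b j, b < 3 ∧ j < n ∧ x = v b j ∧
        ((b = a ∧ (j + 1 = i ∨ i + 1 = j)) ∨ (j = i ∧ (b + 1 = a ∨ a + 1 = b))) := by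
    intro a i x ha hi hU
    have hadj := Uadj _ _ hU
    rw [boxProd_adj] at hadj
    refine ⟨x.1.val, x.2.val, x.1.isLt, x.2.isLt, ?_, ?_⟩
    · simp [hv, vx, Prod.ext_iff, Fin.ext_iff, Nat.mod_eq_of_lt, x.1.isLt, x.2.isLt]
    · have hval1 : (v a i).1.val = a := by simp [hv, vx, Nat.mod_eq_of_lt ha]
      have hval2 : (v a i).2.val = i := by simp [hv, vx, Nat.mod_eq_of_lt hi]
      rcases hadj with ⟨hadj1, hadj2⟩ | ⟨hadj1, hadj2⟩
      · rw [pathGraph_adj] at hadj1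
        have : x.2.val = i := by rw [← hadj2, hval2]
        right; exact ⟨this, by omega⟩
      · rw [pathGraph_adj] at hadj1
        have : x.1.val = a := by rw [← hadj2, hval1]
        left; exact ⟨this, by omega⟩
  -- interior vertices at value level
  have hI : ∀ a i, a < 3 → i < n → ¬(a = 1 ∧ k ≤ i) →
      ∃ x y, x ≠ y ∧ U (v a i) x ∧ U (v a i) y := by
    intro a i ha hi hcond
    apply Hint
    intro ⟨h1, h2⟩
    apply hcond
    constructor
    · have := congrArg Fin.val h1
      simp [hv, vx, Nat.mod_eq_of_lt ha] at this
      exact this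
    · have : (v a i).2.val = i := by simp [hv, vx, Nat.mod_eq_of_lt hi]
      omega
  -- pick lemmas
  have pick2 : ∀ (w X Y : Fin 3 × Fin n),
      (∃ x y, x ≠ y ∧ U w x ∧ U w y) → (∀ x, U w x → x = X ∨ x = Y) →
      U w X ∧ U w Y := by
    intro w X Y ⟨x, y, hxy, hx, hy⟩ hfilt
    rcases hfilt x hx with h | h <;> rcases hfilt y hy with h' | h' <;>
      first
        | exact absurd (h.trans h'.symm) hxy
        | exact ⟨h ▸ hx, h' ▸ hy⟩
        | exact ⟨h' ▸ hy, h ▸ hx⟩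
  have pick1 : ∀ (w X : Fin 3 × Fin n),
      (∃ x y, x ≠ y ∧ U w x ∧ U w y) → (∀ x, U w x → x = X) → False := by
    intro w X ⟨x, y, hxy, hx, hy⟩ hfilt
    exact hxy ((hfilt x hx).trans (hfilt y hy).symm)
  have pick3 : ∀ (w X Y Z : Fin 3 × Fin n),
      (∃ x y, x ≠ y ∧ U w x ∧ U w y) → (∀ x, U w x → x = X ∨ x = Y ∨ x = Z) →
      (U w X ∧ U w Y) ∨ (U w X ∧ U w Z) ∨ (U w Y ∧ U w Z) := by
    intro w X Y Z ⟨x, y, hxy, hx, hy⟩ hfilt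
    rcases hfilt x hx with h | h | h <;> rcases hfilt y hy with h' | h' | h' <;>
      first
        | exact absurd (h.trans h'.symm) hxy
        | exact Or.inl ⟨h ▸ hx, h' ▸ hy⟩
        | exact Or.inl ⟨h' ▸ hy, h ▸ hx⟩
        | exact Or.inr (Or.inl ⟨h ▸ hx, h' ▸ hy⟩)
        | exact Or.inr (Or.inl ⟨h' ▸ hy, h ▸ hx⟩)
        | exact Or.inr (Or.inr ⟨h ▸ hx, h' ▸ hy⟩)
        | exact Or.inr (Or.inr ⟨h' ▸ hy, h ▸ hx⟩)
  have full : ∀ (w a b : Fin 3 × Fin n), a ≠ b → U w a → U w b →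
      ∀ c, c ≠ a → c ≠ b → ¬U w c := by
    intro w a b hab ha hb c hca hcb hc
    exact Hmax w a b c hab (fun h => hca h.symm) (fun h => hcb h.symm) ha hb hc
  have vne : ∀ {a i b j : ℕ}, a < 3 → i < n → b < 3 → j < n → ¬(a = b ∧ i = j) →
      v a i ≠ v b j := fun ha hi hb hj hne h => hne ((veq ha hi hb hj).mp h)
  -- analysis of corner column 0 vertices (rows 0 and 2)
  have filt00 : ∀ x, U (v 0 0) x → x = v 1 0 ∨ x = v 0 1 := by
    intro x hx
    obtain ⟨b, j, hb, hj, rfl, hrel⟩ := hnbr 0 0 x (by omega) (by omega) hx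
    rcases hrel with ⟨hb', hj'⟩ | ⟨hj', hb'⟩
    · rcases hj' with h | h
      · exact absurd h (by omega)
      · right; exact (veq hb hj (by omega) (by omega)).mpr ⟨by omega, by omega⟩
    · rcases hb' with h | h
      · exact absurd h (by omega)
      · left; exact (veq hb hj (by omega) (by omega)).mpr ⟨by omega, by omega⟩
  have filt20 : ∀ x, U (v 2 0) x → x = v 1 0 ∨ x = v 2 1 := by
    intro x hx
    obtain ⟨b, j, hb, hj, rfl, hrel⟩ := hnbr 2 0 x (by omega) (by omega) hx
    rcases hrel with ⟨hb', hj'⟩ | ⟨hj', hb'⟩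
    · rcases hj' with h | h
      · exact absurd h (by omega)
      · right; exact (veq hb hj (by omega) (by omega)).mpr ⟨by omega, by omega⟩
    · rcases hb' with h | h
      · left; exact (veq hb hj (by omega) (by omega)).mpr ⟨by omega, by omega⟩
      · exact absurd h (by omega)
  have h00 := pick2 _ _ _ (hI 0 0 (by omega) (by omega) (by omega)) filt00
  have h20 := pick2 _ _ _ (hI 2 0 (by omega) (by omega) (by omega)) filt20
  -- case k = 0 : the endpoint (1,0) would have two distinct neighbours
  by_cases hk0 : k = 0
  · subst hk0
    have := Hend (v 0 0) (v 2 0) (Usymm _ _ h00.1) (Usymm _ _ h20.1)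
    rw [veq (by omega) (by omega) (by omega) (by omega)] at this
    omega
  have hk1 : 1 ≤ k := by omega
  have hn2 : 2 ≤ n := by omega
  -- base state A at cut 0
  have baseA : U (v 0 0) (v 0 1) ∧ U (v 2 0) (v 2 1) ∧ ¬U (v 1 0) (v 1 1) := by
    refine ⟨h00.2, h20.2, ?_⟩
    exact full (v 1 0) (v 0 0) (v 2 0)
      (vne (by omega) (by omega) (by omega) (by omega) (by omega))
      (Usymm _ _ h00.1) (Usymm _ _ h20.1) _
      (vne (by omega) (by omega) (by omega) (by omega) (by omega))
      (vne (by omega) (by omega) (by omega) (by omega) (by omega))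
  -- Transition: state A at cut c  →  state B or Z at cut c+1
  have transAB : ∀ c, c + 1 < k →
      (U (v 0 c) (v 0 (c+1)) ∧ U (v 2 c) (v 2 (c+1)) ∧ ¬U (v 1 c) (v 1 (c+1))) →
      ((U (v 1 (c+1)) (v 1 (c+2)) ∧ ∃ σ ρ, σ + ρ = 2 ∧ σ ≠ 1 ∧ ρ ≠ 1 ∧
          U (v σ (c+1)) (v σ (c+2)) ∧ ¬U (v ρ (c+1)) (v ρ (c+2))) ∨
       (¬U (v 0 (c+1)) (v 0 (c+2)) ∧ ¬U (v 1 (c+1)) (v 1 (c+2)) ∧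
        ¬U (v 2 (c+1)) (v 2 (c+2)))) := by
    intro c hck ⟨hA0, hA2, hA1⟩
    have f1 : ∀ x, U (v 1 (c+1)) x → x = v 0 (c+1) ∨ x = v 2 (c+1) ∨ x = v 1 (c+2) := by
      intro x hx
      obtain ⟨b, j, hb, hj, rfl, hrel⟩ := hnbr 1 (c+1) _ (by omega) (by omega) hx
      rcases hrel with ⟨hb', hj'⟩ | ⟨hj', hb'⟩
      · rcases hj' with h | h
        · have he : v b j = v 1 c :=
            (veq hb hj (by omega) (by omega)).mpr ⟨by omega, by omega⟩
          exact absurd (he ▸ Usymm _ _ hx) hA1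
        · right; right; exact (veq hb hj (by omega) (by omega)).mpr ⟨by omega, by omega⟩
      · rcases hb' with h | h
        · left; exact (veq hb hj (by omega) (by omega)).mpr ⟨by omega, by omega⟩
        · right; left; exact (veq hb hj (by omega) (by omega)).mpr ⟨by omega, by omega⟩
    rcases pick3 _ _ _ _ (hI 1 (c+1) (by omega) (by omega) (by omega)) f1 with
      ⟨ha1, ha2⟩ | ⟨hb1, hb2⟩ | ⟨hc1, hc2⟩
    · -- both verticals used : state Z at cut c+1
      right
      refine ⟨?_, ?_, ?_⟩
      · exact full (v 0 (c+1)) (v 0 c) (v 1 (c+1))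
          (vne (by omega) (by omega) (by omega) (by omega) (by omega))
          (Usymm _ _ hA0) (Usymm _ _ ha1) _
          (vne (by omega) (by omega) (by omega) (by omega) (by omega))
          (vne (by omega) (by omega) (by omega) (by omega) (by omega))
      · exact full (v 1 (c+1)) (v 0 (c+1)) (v 2 (c+1))
          (vne (by omega) (by omega) (by omega) (by omega) (by omega))
          ha1 ha2 _
          (vne (by omega) (by omega) (by omega) (by omega) (by omega))
          (vne (by omega) (by omega) (by omega) (by omega) (by omega))
      · exact full (v 2 (c+1)) (v 2 c) (v 1 (c+1))
          (vne (by omega) (by omega) (by omega) (by omega) (by omega))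
          (Usymm _ _ hA2) (Usymm _ _ ha2) _
          (vne (by omega) (by omega) (by omega) (by omega) (by omega))
          (vne (by omega) (by omega) (by omega) (by omega) (by omega))
    · -- used: (0,c+1) and (1,c+2) : state B with σ = 2, ρ = 0
      left
      have hfull1 : ¬U (v 1 (c+1)) (v 2 (c+1)) := full (v 1 (c+1)) (v 0 (c+1)) (v 1 (c+2))
        (vne (by omega) (by omega) (by omega) (by omega) (by omega)) hb1 hb2 _
        (vne (by omega) (by omega) (by omega) (by omega) (by omega))
        (vne (by omega) (by omega) (by omega) (by omega) (by omega))
      have hz0 : ¬U (v 0 (c+1)) (v 0 (c+2)) := full (v 0 (c+1)) (v 0 c) (v 1 (c+1))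
        (vne (by omega) (by omega) (by omega) (by omega) (by omega))
        (Usymm _ _ hA0) (Usymm _ _ hb1) _
        (vne (by omega) (by omega) (by omega) (by omega) (by omega))
        (vne (by omega) (by omega) (by omega) (by omega) (by omega))
      have f2 : ∀ x, U (v 2 (c+1)) x → x = v 2 c ∨ x = v 2 (c+2) := by
        intro x hx
        obtain ⟨b, j, hb, hj, rfl, hrel⟩ := hnbr 2 (c+1) _ (by omega) (by omega) hx
        rcases hrel with ⟨hb', hj'⟩ | ⟨hj', hb'⟩
        · rcases hj' with h | h
          · left; exact (veq hb hj (by omega) (by omega)).mpr ⟨by omega, by omega⟩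
          · right; exact (veq hb hj (by omega) (by omega)).mpr ⟨by omega, by omega⟩
        · rcases hb' with h | h
          · have he : v b j = v 1 (c+1) :=
              (veq hb hj (by omega) (by omega)).mpr ⟨by omega, by omega⟩
            exact absurd (he ▸ Usymm _ _ hx) hfull1
          · exact absurd h (by omega)
      have h2 := pick2 _ _ _ (hI 2 (c+1) (by omega) (by omega) (by omega)) f2
      exact ⟨hb2, 2, 0, by omega, by omega, by omega, h2.2, hz0⟩
    · -- used: (2,c+1) and (1,c+2) : state B with σ = 0, ρ = 2
      left
      have hfull1 : ¬U (v 1 (c+1)) (v 0 (c+1)) := full (v 1 (c+1)) (v 2 (c+1)) (v 1 (c+2))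
        (vne (by omega) (by omega) (by omega) (by omega) (by omega)) hc1 hc2 _
        (vne (by omega) (by omega) (by omega) (by omega) (by omega))
        (vne (by omega) (by omega) (by omega) (by omega) (by omega))
      have hz2 : ¬U (v 2 (c+1)) (v 2 (c+2)) := full (v 2 (c+1)) (v 2 c) (v 1 (c+1))
        (vne (by omega) (by omega) (by omega) (by omega) (by omega))
        (Usymm _ _ hA2) (Usymm _ _ hc1) _
        (vne (by omega) (by omega) (by omega) (by omega) (by omega))
        (vne (by omega) (by omega) (by omega) (by omega) (by omega))
      have f2 : ∀ x, U (v 0 (c+1)) x → x = v 0 c ∨ x = v 0 (c+2) := by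
        intro x hx
        obtain ⟨b, j, hb, hj, rfl, hrel⟩ := hnbr 0 (c+1) _ (by omega) (by omega) hx
        rcases hrel with ⟨hb', hj'⟩ | ⟨hj', hb'⟩
        · rcases hj' with h | h
          · left; exact (veq hb hj (by omega) (by omega)).mpr ⟨by omega, by omega⟩
          · right; exact (veq hb hj (by omega) (by omega)).mpr ⟨by omega, by omega⟩
        · rcases hb' with h | h
          · exact absurd h (by omega)
          · have he : v b j = v 1 (c+1) :=
              (veq hb hj (by omega) (by omega)).mpr ⟨by omega, by omega⟩
            exact absurd (he ▸ Usymm _ _ hx) hfull1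
      have h0 := pick2 _ _ _ (hI 0 (c+1) (by omega) (by omega) (by omega)) f2
      exact ⟨hc2, 0, 2, by omega, by omega, by omega, h0.2, hz2⟩
  -- Transition: state B at cut c → state A at cut c+1
  have transBA : ∀ c, c + 1 < k →
      (U (v 1 c) (v 1 (c+1)) ∧ ∃ σ ρ, σ + ρ = 2 ∧ σ ≠ 1 ∧ ρ ≠ 1 ∧
        U (v σ c) (v σ (c+1)) ∧ ¬U (v ρ c) (v ρ (c+1))) →
      (U (v 0 (c+1)) (v 0 (c+2)) ∧ U (v 2 (c+1)) (v 2 (c+2)) ∧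
       ¬U (v 1 (c+1)) (v 1 (c+2))) := by
    intro c hck ⟨hm1, σ, ρ, hsum, hs1, hr1, hσ, hρ⟩
    have hσρ : (σ = 0 ∧ ρ = 2) ∨ (σ = 2 ∧ ρ = 0) := by omega
    -- by symmetry handle both concrete cases; we do them uniformly:
    rcases hσρ with ⟨hσ0, hρ2⟩ | ⟨hσ2, hρ0⟩
    · subst hσ0; subst hρ2
      -- row 2 excluded on the left
      have f2 : ∀ x, U (v 2 (c+1)) x → x = v 1 (c+1) ∨ x = v 2 (c+2) := by
        intro x hx
        obtain ⟨b, j, hb, hj, rfl, hrel⟩ := hnbr 2 (c+1) _ (by omega) (by omega) hx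
        rcases hrel with ⟨hb', hj'⟩ | ⟨hj', hb'⟩
        · rcases hj' with h | h
          · have he : v b j = v 2 c :=
              (veq hb hj (by omega) (by omega)).mpr ⟨by omega, by omega⟩
            exact absurd (he ▸ Usymm _ _ hx) hρ
          · right; exact (veq hb hj (by omega) (by omega)).mpr ⟨by omega, by omega⟩
        · rcases hb' with h | h
          · left; exact (veq hb hj (by omega) (by omega)).mpr ⟨by omega, by omega⟩
          · exact absurd h (by omega)
      have h2 := pick2 _ _ _ (hI 2 (c+1) (by omega) (by omega) (by omega)) f2
      have hfull1a : ¬U (v 1 (c+1)) (v 1 (c+2)) := full (v 1 (c+1)) (v 1 c) (v 2 (c+1))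
        (vne (by omega) (by omega) (by omega) (by omega) (by omega))
        (Usymm _ _ hm1) (Usymm _ _ h2.1) _
        (vne (by omega) (by omega) (by omega) (by omega) (by omega))
        (vne (by omega) (by omega) (by omega) (by omega) (by omega))
      have hfull1b : ¬U (v 1 (c+1)) (v 0 (c+1)) := full (v 1 (c+1)) (v 1 c) (v 2 (c+1))
        (vne (by omega) (by omega) (by omega) (by omega) (by omega))
        (Usymm _ _ hm1) (Usymm _ _ h2.1) _
        (vne (by omega) (by omega) (by omega) (by omega) (by omega))
        (vne (by omega) (by omega) (by omega) (by omega) (by omega))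
      have f0 : ∀ x, U (v 0 (c+1)) x → x = v 0 c ∨ x = v 0 (c+2) := by
        intro x hx
        obtain ⟨b, j, hb, hj, rfl, hrel⟩ := hnbr 0 (c+1) _ (by omega) (by omega) hx
        rcases hrel with ⟨hb', hj'⟩ | ⟨hj', hb'⟩
        · rcases hj' with h | h
          · left; exact (veq hb hj (by omega) (by omega)).mpr ⟨by omega, by omega⟩
          · right; exact (veq hb hj (by omega) (by omega)).mpr ⟨by omega, by omega⟩
        · rcases hb' with h | h
          · exact absurd h (by omega)
          · have he : v b j = v 1 (c+1) :=
              (veq hb hj (by omega) (by omega)).mpr ⟨by omega, by omega⟩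
            exact absurd (he ▸ Usymm _ _ hx) hfull1b
      have h0 := pick2 _ _ _ (hI 0 (c+1) (by omega) (by omega) (by omega)) f0
      exact ⟨h0.2, h2.2, hfull1a⟩
    · subst hσ2; subst hρ0
      have f0 : ∀ x, U (v 0 (c+1)) x → x = v 1 (c+1) ∨ x = v 0 (c+2) := by
        intro x hx
        obtain ⟨b, j, hb, hj, rfl, hrel⟩ := hnbr 0 (c+1) _ (by omega) (by omega) hx
        rcases hrel with ⟨hb', hj'⟩ | ⟨hj', hb'⟩
        · rcases hj' with h | h
          · have he : v b j = v 0 c :=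
              (veq hb hj (by omega) (by omega)).mpr ⟨by omega, by omega⟩
            exact absurd (he ▸ Usymm _ _ hx) hρ
          · right; exact (veq hb hj (by omega) (by omega)).mpr ⟨by omega, by omega⟩
        · rcases hb' with h | h
          · exact absurd h (by omega)
          · left; exact (veq hb hj (by omega) (by omega)).mpr ⟨by omega, by omega⟩
      have h0 := pick2 _ _ _ (hI 0 (c+1) (by omega) (by omega) (by omega)) f0
      have hfull1a : ¬U (v 1 (c+1)) (v 1 (c+2)) := full (v 1 (c+1)) (v 1 c) (v 0 (c+1))
        (vne (by omega) (by omega) (by omega) (by omega) (by omega))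
        (Usymm _ _ hm1) (Usymm _ _ h0.1) _
        (vne (by omega) (by omega) (by omega) (by omega) (by omega))
        (vne (by omega) (by omega) (by omega) (by omega) (by omega))
      have hfull1b : ¬U (v 1 (c+1)) (v 2 (c+1)) := full (v 1 (c+1)) (v 1 c) (v 0 (c+1))
        (vne (by omega) (by omega) (by omega) (by omega) (by omega))
        (Usymm _ _ hm1) (Usymm _ _ h0.1) _
        (vne (by omega) (by omega) (by omega) (by omega) (by omega))
        (vne (by omega) (by omega) (by omega) (by omega) (by omega))
      have f2 : ∀ x, U (v 2 (c+1)) x → x = v 2 c ∨ x = v 2 (c+2) := by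
        intro x hx
        obtain ⟨b, j, hb, hj, rfl, hrel⟩ := hnbr 2 (c+1) _ (by omega) (by omega) hx
        rcases hrel with ⟨hb', hj'⟩ | ⟨hj', hb'⟩
        · rcases hj' with h | h
          · left; exact (veq hb hj (by omega) (by omega)).mpr ⟨by omega, by omega⟩
          · right; exact (veq hb hj (by omega) (by omega)).mpr ⟨by omega, by omega⟩
        · rcases hb' with h | h
          · have he : v b j = v 1 (c+1) :=
              (veq hb hj (by omega) (by omega)).mpr ⟨by omega, by omega⟩
            exact absurd (he ▸ Usymm _ _ hx) hfull1b
          · exact absurd h (by omega)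
      have h2 := pick2 _ _ _ (hI 2 (c+1) (by omega) (by omega) (by omega)) f2
      exact ⟨h0.2, h2.2, hfull1a⟩
  -- Transition: state Z at cut c → state A at cut c+1
  have transZA : ∀ c, c + 1 < k →
      (¬U (v 0 c) (v 0 (c+1)) ∧ ¬U (v 1 c) (v 1 (c+1)) ∧ ¬U (v 2 c) (v 2 (c+1))) →
      (U (v 0 (c+1)) (v 0 (c+2)) ∧ U (v 2 (c+1)) (v 2 (c+2)) ∧
       ¬U (v 1 (c+1)) (v 1 (c+2))) := by
    intro c hck ⟨hZ0, hZ1, hZ2⟩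
    have f0 : ∀ x, U (v 0 (c+1)) x → x = v 1 (c+1) ∨ x = v 0 (c+2) := by
      intro x hx
      obtain ⟨b, j, hb, hj, rfl, hrel⟩ := hnbr 0 (c+1) _ (by omega) (by omega) hx
      rcases hrel with ⟨hb', hj'⟩ | ⟨hj', hb'⟩
      · rcases hj' with h | h
        · have he : v b j = v 0 c :=
            (veq hb hj (by omega) (by omega)).mpr ⟨by omega, by omega⟩
          exact absurd (he ▸ Usymm _ _ hx) hZ0
        · right; exact (veq hb hj (by omega) (by omega)).mpr ⟨by omega, by omega⟩
      · rcases hb' with h | h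
        · exact absurd h (by omega)
        · left; exact (veq hb hj (by omega) (by omega)).mpr ⟨by omega, by omega⟩
    have h0 := pick2 _ _ _ (hI 0 (c+1) (by omega) (by omega) (by omega)) f0
    have f2 : ∀ x, U (v 2 (c+1)) x → x = v 1 (c+1) ∨ x = v 2 (c+2) := by
      intro x hx
      obtain ⟨b, j, hb, hj, rfl, hrel⟩ := hnbr 2 (c+1) _ (by omega) (by omega) hx
      rcases hrel with ⟨hb', hj'⟩ | ⟨hj', hb'⟩
      · rcases hj' with h | h
        · have he : v b j = v 2 c :=
            (veq hb hj (by omega) (by omega)).mpr ⟨by omega, by omega⟩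
          exact absurd (he ▸ Usymm _ _ hx) hZ2
        · right; exact (veq hb hj (by omega) (by omega)).mpr ⟨by omega, by omega⟩
      · rcases hb' with h | h
        · left; exact (veq hb hj (by omega) (by omega)).mpr ⟨by omega, by omega⟩
        · exact absurd h (by omega)
    have h2 := pick2 _ _ _ (hI 2 (c+1) (by omega) (by omega) (by omega)) f2
    have hfull1 : ¬U (v 1 (c+1)) (v 1 (c+2)) := full (v 1 (c+1)) (v 0 (c+1)) (v 2 (c+1))
      (vne (by omega) (by omega) (by omega) (by omega) (by omega))
      (Usymm _ _ h0.1) (Usymm _ _ h2.1) _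
      (vne (by omega) (by omega) (by omega) (by omega) (by omega))
      (vne (by omega) (by omega) (by omega) (by omega) (by omega))
    exact ⟨h0.2, h2.2, hfull1⟩
  -- the state invariant along the cuts
  have states : ∀ c, c < k →
      ((Even c → (U (v 0 c) (v 0 (c+1)) ∧ U (v 2 c) (v 2 (c+1)) ∧
          ¬U (v 1 c) (v 1 (c+1)))) ∧
       (¬Even c →
         ((U (v 1 c) (v 1 (c+1)) ∧ ∃ σ ρ, σ + ρ = 2 ∧ σ ≠ 1 ∧ ρ ≠ 1 ∧
             U (v σ c) (v σ (c+1)) ∧ ¬U (v ρ c) (v ρ (c+1))) ∨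
          (¬U (v 0 c) (v 0 (c+1)) ∧ ¬U (v 1 c) (v 1 (c+1)) ∧
           ¬U (v 2 c) (v 2 (c+1)))))) := by
    intro c
    induction c with
    | zero =>
      intro _
      exact ⟨fun _ => baseA, fun h => absurd Even.zero h⟩
    | succ m ih =>
      intro hmk
      have hm := ih (by omega)
      constructor
      · intro hev
        have hmodd : ¬Even m := by
          rcases hev with ⟨t, ht⟩; intro ⟨s, hs⟩; omega
        rcases hm.2 hmodd with hB | hZ
        · exact transBA m hmk hB
        · exact transZA m hmk hZ
      · intro hodd
        have hmev : Even m := by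
          rcases Nat.even_or_odd m with h | h
          · exact h
          · exact absurd (Odd.add_one h) hodd
        exact transAB m hmk (hm.1 hmev)
  -- final contradiction at column k
  have hkodd : ¬Even (k - 1) := by
    rcases hke with ⟨t, ht⟩; intro ⟨s, hs⟩; omega
  have hfin := (states (k-1) (by omega)).2 hkodd
  rw [show k - 1 + 1 = k from by omega] at hfin
  rcases hfin with ⟨hm1, σ, ρ, hsum, hs1, hr1, hσ, hρ⟩ | ⟨hZ0, hZ1, hZ2⟩
  · -- state B at cut k-1 : the middle edge into (1,k) is used
    have hEq : ∀ x, U (v 1 k) x → x = v 1 (k-1) := fun x hx =>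
      Hend x (v 1 (k-1)) hx (Usymm _ _ hm1)
    have hσρ : (σ = 0 ∧ ρ = 2) ∨ (σ = 2 ∧ ρ = 0) := by omega
    rcases hσρ with ⟨hσ0, hρ2⟩ | ⟨hσ2, hρ0⟩
    · subst hσ0; subst hρ2
      -- analyse (2,k)
      have f : ∀ x, U (v 2 k) x → x = v 2 (k+1) := by
        intro x hx
        obtain ⟨b, j, hb, hj, rfl, hrel⟩ := hnbr 2 k _ (by omega) (by omega) hx
        rcases hrel with ⟨hb', hj'⟩ | ⟨hj', hb'⟩
        · rcases hj' with h | h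
          · have he : v b j = v 2 (k-1) :=
              (veq hb hj (by omega) (by omega)).mpr ⟨by omega, by omega⟩
            exact absurd (he ▸ Usymm _ _ hx) hρ
          · exact (veq hb hj (by omega) (by omega)).mpr ⟨by omega, by omega⟩
        · rcases hb' with h | h
          · -- b = 1 : neighbour is the endpoint (1,k)
            have he : v b j = v 1 k :=
              (veq hb hj (by omega) (by omega)).mpr ⟨by omega, by omega⟩
            have := hEq (v 2 k) (he ▸ Usymm _ _ hx)
            rw [veq (by omega) (by omega) (by omega) (by omega)] at this
            omega
          · exact absurd h (by omega)
      exact pick1 _ _ (hI 2 k (by omega) (by omega) (by omega)) f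
    · subst hσ2; subst hρ0
      have f : ∀ x, U (v 0 k) x → x = v 0 (k+1) := by
        intro x hx
        obtain ⟨b, j, hb, hj, rfl, hrel⟩ := hnbr 0 k _ (by omega) (by omega) hx
        rcases hrel with ⟨hb', hj'⟩ | ⟨hj', hb'⟩
        · rcases hj' with h | h
          · have he : v b j = v 0 (k-1) :=
              (veq hb hj (by omega) (by omega)).mpr ⟨by omega, by omega⟩
            exact absurd (he ▸ Usymm _ _ hx) hρ
          · exact (veq hb hj (by omega) (by omega)).mpr ⟨by omega, by omega⟩
        · rcases hb' with h | h
          · exact absurd h (by omega)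
          · have he : v b j = v 1 k :=
              (veq hb hj (by omega) (by omega)).mpr ⟨by omega, by omega⟩
            have := hEq (v 0 k) (he ▸ Usymm _ _ hx)
            rw [veq (by omega) (by omega) (by omega) (by omega)] at this
            omega
      exact pick1 _ _ (hI 0 k (by omega) (by omega) (by omega)) f
  · -- state Z at cut k-1 : both (0,k) and (2,k) must attach to the endpoint (1,k)
    have f0 : ∀ x, U (v 0 k) x → x = v 1 k ∨ x = v 0 (k+1) := by
      intro x hx
      obtain ⟨b, j, hb, hj, rfl, hrel⟩ := hnbr 0 k _ (by omega) (by omega) hx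
      rcases hrel with ⟨hb', hj'⟩ | ⟨hj', hb'⟩
      · rcases hj' with h | h
        · have he : v b j = v 0 (k-1) :=
            (veq hb hj (by omega) (by omega)).mpr ⟨by omega, by omega⟩
          exact absurd (he ▸ Usymm _ _ hx) hZ0
        · right; exact (veq hb hj (by omega) (by omega)).mpr ⟨by omega, by omega⟩
      · rcases hb' with h | h
        · exact absurd h (by omega)
        · left; exact (veq hb hj (by omega) (by omega)).mpr ⟨by omega, by omega⟩
    have h0 := pick2 _ _ _ (hI 0 k (by omega) (by omega) (by omega)) f0
    have f2 : ∀ x, U (v 2 k) x → x = v 1 k ∨ x = v 2 (k+1) := by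
      intro x hx
      obtain ⟨b, j, hb, hj, rfl, hrel⟩ := hnbr 2 k _ (by omega) (by omega) hx
      rcases hrel with ⟨hb', hj'⟩ | ⟨hj', hb'⟩
      · rcases hj' with h | h
        · have he : v b j = v 2 (k-1) :=
            (veq hb hj (by omega) (by omega)).mpr ⟨by omega, by omega⟩
          exact absurd (he ▸ Usymm _ _ hx) hZ2
        · right; exact (veq hb hj (by omega) (by omega)).mpr ⟨by omega, by omega⟩
      · rcases hb' with h | h
        · left; exact (veq hb hj (by omega) (by omega)).mpr ⟨by omega, by omega⟩
        · exact absurd h (by omega)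
    have h2 := pick2 _ _ _ (hI 2 k (by omega) (by omega) (by omega)) f2
    have := Hend (v 0 k) (v 2 k) (Usymm _ _ h0.1) (Usymm _ _ h2.1)
    rw [veq (by omega) (by omega) (by omega) (by omega)] at this
    omega
end PCAux

/-- There is no path cover `F` of the grid `P₃ □ Pₙ` such that `(2,k)` is an endvertex
for some odd `k` and all endvertices lie in `{2} × {k,…,n}`.  Here rows and columns are
`0`-indexed (`Fin 3 × Fin n`), so the middle row is `1` and "odd `k`" (1-indexed)
becomes `Odd (k.val + 1)`. -/
theorem stmt6 (n : ℕ) :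
    ¬ ∃ F : Set (Σ u v : Fin 3 × Fin n, (pathGraph 3 □ pathGraph n).Walk u v),
      (pathGraph 3 □ pathGraph n).IsPathCover F ∧
      ∃ k : Fin n, Odd (k.val + 1) ∧
        ((1 : Fin 3), k) ∈ (pathGraph 3 □ pathGraph n).pcEnds F ∧
        ∀ x ∈ (pathGraph 3 □ pathGraph n).pcEnds F,
          x.1 = (1 : Fin 3) ∧ k.val ≤ x.2.val := by
  rintro ⟨F, hPC, k, hkodd, hkend, hall⟩
  have hn : 0 < n := lt_of_le_of_lt (Nat.zero_le _) k.isLt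
  have hke : Even k.val := by rcases hkodd with ⟨t, ht⟩; exact ⟨t, by omega⟩
  have hvx : PCAux.vx n hn 1 k.val = ((1 : Fin 3), k) := by
    simp [PCAux.vx, Prod.ext_iff, Fin.ext_iff, Nat.mod_eq_of_lt k.isLt]
  refine PCAux.core n k.val hn k.isLt hke
    (fun u w => ∃ p ∈ F, s(u, w) ∈ p.2.2.edges) ?_ ?_ ?_ ?_ ?_
  · -- symmetry
    rintro u w ⟨p, hp, he⟩
    exact ⟨p, hp, by rwa [Sym2.eq_swap]⟩
  · -- adjacency
    rintro u w ⟨p, hp, he⟩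
    exact p.2.2.adj_of_mem_edges he
  · -- interior vertices have two distinct used neighbours
    rintro w hw
    have hne : w ∉ (pathGraph 3 □ pathGraph n).pcEnds F := fun hmem => hw (hall w hmem)
    obtain ⟨p, hp, hsup⟩ := hPC.2.2 w
    have h1 : w ≠ p.1 := fun h => hne ⟨p, hp, Or.inl h.symm⟩
    have h2 : w ≠ p.2.1 := fun h => hne ⟨p, hp, Or.inr h.symm⟩
    obtain ⟨a, b, hab, ha, hb⟩ := PCAux.interior_two p.2.2 (hPC.1 p hp).1 hsup h1 h2
    exact ⟨a, b, hab, ⟨p, hp, ha⟩, ⟨p, hp, hb⟩⟩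
  · -- no vertex has three distinct used neighbours
    rintro w a b c hab hac hbc ⟨p, hp, hea⟩ ⟨q, hq, heb⟩ ⟨r, hr, hec⟩
    have hwp := SimpleGraph.Walk.fst_mem_support_of_mem_edges _ hea
    have hwq := SimpleGraph.Walk.fst_mem_support_of_mem_edges _ heb
    have hwr := SimpleGraph.Walk.fst_mem_support_of_mem_edges _ hec
    have hpq : p = q := by
      by_contra h
      exact hPC.2.1 p hp q hq h w hwp hwq
    have hpr : p = r := by
      by_contra h
      exact hPC.2.1 p hp r hr h w hwp hwr
    subst hpq; subst hpr
    exact PCAux.no_three p.2.2 (hPC.1 p hp).1 hab hac hbc hea heb hec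
  · -- the endvertex (1,k) has at most one used neighbour
    rw [hvx]
    rintro a b ⟨q, hq, hea⟩ ⟨r, hr, heb⟩
    obtain ⟨p, hp, hend⟩ := hkend
    have hwp : ((1 : Fin 3), k) ∈ p.2.2.support := by
      rcases hend with h | h
      · exact h ▸ p.2.2.start_mem_support
      · exact h ▸ p.2.2.end_mem_support
    have hwq := SimpleGraph.Walk.fst_mem_support_of_mem_edges _ hea
    have hwr := SimpleGraph.Walk.fst_mem_support_of_mem_edges _ heb
    have hqp : q = p := by
      by_contra h
      exact hPC.2.1 q hq p hp h _ hwq hwp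
    have hrp : r = p := by
      by_contra h
      exact hPC.2.1 r hr p hp h _ hwr hwp
    rw [hqp] at hea
    rw [hrp] at heb
    rcases hend with h | h
    · rw [← h] at hea heb
      exact PCAux.end_unique p.2.2 (hPC.1 p hp).1 hea heb
    · rw [← h] at hea heb
      refine PCAux.end_unique p.2.2.reverse ((hPC.1 p hp).1.reverse) ?_ ?_ <;>
        rw [SimpleGraph.Walk.edges_reverse, List.mem_reverse] <;> assumption
end

section
/- There is no path cover 𝒫 of P₃ □ Pₙ satisfying all of: (i) every endvertex of 𝒫 lies in the middle row {2} × {1,...,n}; (ii) (2,k) is an endvertex of 𝒫 for some odd integer k while (2,k−1) is not an endvertex of 𝒫; and (iii) for every odd i < k, (2,i) is an endvertex of 𝒫 if and only if (2,i−1) is an endvertex of 𝒫. -/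
open SimpleGraph

namespace Stmt7Aux

variable {V : Type*}

/-- Sum of `w a + w b` over consecutive pairs of a list. -/
def esum (w : V → ℤ) : List V → ℤ
  | [] => 0
  | [_] => 0
  | a :: b :: t => (w a + w b) + esum w (b :: t)

lemma esum_cons₂ (w : V → ℤ) (a b : V) (t : List V) :
    esum w (a :: b :: t) = (w a + w b) + esum w (b :: t) := rfl

lemma walk_esum {G : SimpleGraph V} (w : V → ℤ) :
    ∀ {u v : V} (q : G.Walk u v),
      2 * (q.support.map w).sum = w u + w v + esum w q.support := by
  intro u v q
  induction q with
  | nil => simp [esum]; ring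
  | @cons u b v h q ih =>
    have hq : q.support = b :: q.support.tail := q.support_eq_cons
    calc 2 * (((SimpleGraph.Walk.cons h q).support).map w).sum
        = 2 * w u + 2 * ((q.support.map w).sum) := by
          rw [SimpleGraph.Walk.support_cons]; simp; ring
      _ = 2 * w u + (w b + w v + esum w q.support) := by rw [ih]
      _ = w u + w v + ((w u + w b) + esum w q.support) := by ring
      _ = w u + w v + esum w ((SimpleGraph.Walk.cons h q).support) := by
          rw [SimpleGraph.Walk.support_cons, hq, esum_cons₂, ← hq]

section Hnd

variable [DecidableEq V]

/-- Auxiliary indicator used in the inductive bound on `esum`. -/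
def Hnd (x y : V) (l : List V) : ℤ :=
  if x ∈ l ∧ (l.head? = some x → y ∈ l) then 1 else 0

lemma Hnd_nonneg (x y : V) (l : List V) : 0 ≤ Hnd x y l := by
  unfold Hnd; split <;> norm_num

lemma Hnd_le_one (x y : V) (l : List V) : Hnd x y l ≤ 1 := by
  unfold Hnd; split <;> norm_num

lemma Hnd_eq_zero {x : V} {l : List V} (h : x ∉ l) (y : V) : Hnd x y l = 0 := by
  unfold Hnd
  rw [if_neg]
  rintro ⟨h1, -⟩
  exact h h1

lemma Hnd_cons_le {a : V} {m : List V} (ha : a ∉ m) (x y : V) :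
    Hnd x y m ≤ Hnd x y (a :: m) := by
  unfold Hnd
  split_ifs with h1 h2 <;> try norm_num
  obtain ⟨hxm, _⟩ := h1
  refine absurd ⟨List.mem_cons_of_mem _ hxm, fun he => ?_⟩ h2
  exfalso
  have : a = x := by simpa using he
  exact ha (this ▸ hxm)

lemma key_step {a b : V} {t : List V} (hnd : a ∉ b :: t) (x y : V)
    (horient : (a = x ∧ b = y) ∨ (a = y ∧ b = x)) :
    Hnd x y (b :: t) = 0 ∧ Hnd x y (a :: b :: t) = 1 := by
  have hab : a ≠ b := fun h => hnd (h ▸ (List.mem_cons_self : b ∈ b :: t))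
  rcases horient with ⟨rfl, rfl⟩ | ⟨rfl, rfl⟩
  · constructor
    · unfold Hnd
      rw [if_neg]
      rintro ⟨hmem, -⟩
      exact hnd hmem
    · unfold Hnd
      rw [if_pos]
      exact ⟨List.mem_cons_self, fun _ => List.mem_cons_of_mem _ List.mem_cons_self⟩
  · constructor
    · unfold Hnd
      rw [if_neg]
      rintro ⟨-, himp⟩
      have : a ∈ b :: t := himp (by simp)
      exact hnd this
    · unfold Hnd
      rw [if_pos]
      refine ⟨List.mem_cons_of_mem _ List.mem_cons_self, fun he => ?_⟩
      exfalso
      have : a = b := by simpa using he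
      exact hab this

lemma esum_le_core (w : V → ℤ) (R : V → V → Prop) (x0 y0 x2 y2 : V)
    (hch : ∀ a b, R a b → w a + w b ≤ 0 ∨ (w a + w b ≤ 1 ∧
      ((a = x0 ∧ b = y0) ∨ (a = y0 ∧ b = x0) ∨ (a = x2 ∧ b = y2) ∨ (a = y2 ∧ b = x2)))) :
    ∀ l : List V, List.Chain' R l → l.Nodup →
      esum w l ≤ Hnd x0 y0 l + Hnd x2 y2 l := by
  intro l
  induction l with
  | nil => intros; simp [esum, Hnd]
  | cons a m ih =>
    intro hchain hnd
    match m, ih with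
    | [], _ =>
      have := Hnd_nonneg x0 y0 [a]
      have := Hnd_nonneg x2 y2 [a]
      simp only [esum]
      omega
    | b :: t, ih =>
      change List.IsChain R (a :: b :: t) at hchain
      rw [List.isChain_cons_cons] at hchain
      obtain ⟨hRab, hchain'⟩ := hchain
      rw [List.nodup_cons] at hnd
      obtain ⟨ham, hndm⟩ := hnd
      have hIH := ih hchain' hndm
      rw [esum_cons₂]
      rcases hch a b hRab with hle | ⟨hle1, hcase⟩
      · have h0 := Hnd_cons_le ham x0 y0
        have h2 := Hnd_cons_le ham x2 y2
        omega
      · rcases hcase with h | h | h | h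
        · obtain ⟨hm0, hl0⟩ := key_step ham x0 y0 (Or.inl h)
          have h2 := Hnd_cons_le ham x2 y2
          omega
        · obtain ⟨hm0, hl0⟩ := key_step ham x0 y0 (Or.inr h)
          have h2 := Hnd_cons_le ham x2 y2
          omega
        · obtain ⟨hm2, hl2⟩ := key_step ham x2 y2 (Or.inl h)
          have h0 := Hnd_cons_le ham x0 y0
          omega
        · obtain ⟨hm2, hl2⟩ := key_step ham x2 y2 (Or.inr h)
          have h0 := Hnd_cons_le ham x0 y0
          omega

end Hnd


/-- The weight function: `(−1)^(row+col)` on columns `≤ K`, `0` beyond. -/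
def wfun (n K : ℕ) : Fin 3 × Fin n → ℤ :=
  fun v => if v.2.val ≤ K then (-1) ^ (v.1.val + v.2.val) else 0

lemma sum_wfun (n K : ℕ) (hK : Even K) (hKn : K < n) :
    ∑ v : Fin 3 × Fin n, wfun n K v = 1 := by
  have hw : ∀ (r : Fin 3) (c : Fin n),
      wfun n K (r, c) = (-1 : ℤ) ^ r.val * (if c.val ≤ K then (-1) ^ c.val else 0) := by
    intro r c
    unfold wfun
    dsimp only
    split_ifs with h
    · rw [pow_add]
    · ring
  calc ∑ v : Fin 3 × Fin n, wfun n K v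
      = ∑ r : Fin 3, ∑ c : Fin n, wfun n K (r, c) := by rw [Fintype.sum_prod_type]
    _ = ∑ r : Fin 3, (-1 : ℤ) ^ r.val *
          (∑ c : Fin n, (if c.val ≤ K then (-1 : ℤ) ^ c.val else 0)) := by
        refine Finset.sum_congr rfl fun r _ => ?_
        rw [Finset.mul_sum]
        exact Finset.sum_congr rfl fun c _ => hw r c
    _ = (∑ r : Fin 3, (-1 : ℤ) ^ r.val) *
          (∑ c : Fin n, (if c.val ≤ K then (-1 : ℤ) ^ c.val else 0)) := by
        rw [Finset.sum_mul]
    _ = 1 * (∑ c : Fin n, (if c.val ≤ K then (-1 : ℤ) ^ c.val else 0)) := by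
        norm_num [Fin.sum_univ_three]
    _ = 1 := by
        rw [one_mul]
        rw [Fin.sum_univ_eq_sum_range (fun i => if i ≤ K then (-1 : ℤ) ^ i else 0) n]
        rw [← Finset.sum_subset (Finset.range_subset_range.mpr hKn)
          (fun x _ hx => by
            rw [if_neg]
            simp only [Finset.mem_range] at hx
            omega)]
        rw [Finset.sum_congr rfl (fun x hx => by
          rw [if_pos]
          simp only [Finset.mem_range] at hx
          omega)]
        rw [neg_one_geom_sum, if_neg]
        simp [Nat.even_add_one, hK]

lemma charCore (n K : ℕ) (hK : Even K) (hKn : K < n)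
    (a b : Fin 3 × Fin n) (hadj : (pathGraph 3 □ pathGraph n).Adj a b) :
    (wfun n K a + wfun n K b ≤ 0) ∨ (wfun n K a + wfun n K b = 1 ∧
      ∃ (h : K + 1 < n) (r : Fin 3), (r.val = 0 ∨ r.val = 2) ∧
        ((a = (r, ⟨K, hKn⟩) ∧ b = (r, ⟨K + 1, h⟩)) ∨
         (b = (r, ⟨K, hKn⟩) ∧ a = (r, ⟨K + 1, h⟩)))) := by
  obtain ⟨ra, ca⟩ := a
  obtain ⟨rb, cb⟩ := b
  rw [boxProd_adj] at hadj
  rcases hadj with ⟨hr, hc⟩ | ⟨hc, hr⟩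
  · -- same column, adjacent rows
    left
    rw [pathGraph_adj] at hr
    dsimp only at hr hc
    subst hc
    unfold wfun
    dsimp only
    split_ifs with h
    · rcases hr with h1 | h1
      · have he : rb.val + ca.val = (ra.val + ca.val) + 1 := by omega
        rw [he, pow_succ]
        exact le_of_eq (by ring)
      · have he : ra.val + ca.val = (rb.val + ca.val) + 1 := by omega
        rw [he, pow_succ]
        exact le_of_eq (by ring)
    · norm_num
  · -- same row, adjacent columns
    rw [pathGraph_adj] at hc
    dsimp only at hr hc
    subst hr
    unfold wfun
    dsimp only
    by_cases hca : ca.val ≤ K <;> by_cases hcb : cb.val ≤ K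
    · left
      rw [if_pos hca, if_pos hcb]
      rcases hc with h1 | h1
      · have he : ra.val + cb.val = (ra.val + ca.val) + 1 := by omega
        rw [he, pow_succ]
        exact le_of_eq (by ring)
      · have he : ra.val + ca.val = (ra.val + cb.val) + 1 := by omega
        rw [he, pow_succ]
        exact le_of_eq (by ring)
    · -- ca ≤ K < cb, so ca = K, cb = K+1
      have hc1 : ca.val + 1 = cb.val := by omega
      have hcak : ca.val = K := by omega
      have hn1 : K + 1 < n := by
        have := cb.isLt; omega
      rw [if_pos hca, if_neg hcb, add_zero]
      have hpow : (-1 : ℤ) ^ (ra.val + ca.val) = (-1) ^ ra.val := by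
        rw [hcak, pow_add, hK.neg_one_pow, mul_one]
      rw [hpow]
      have hca' : ca = ⟨K, hKn⟩ := Fin.ext hcak
      have hcb' : cb = ⟨K + 1, hn1⟩ := Fin.ext (show cb.val = K + 1 by omega)
      have h3 : ra.val = 0 ∨ ra.val = 1 ∨ ra.val = 2 := by omega
      rcases h3 with h3 | h3 | h3
      · exact Or.inr ⟨by rw [h3]; norm_num,
          hn1, ra, Or.inl h3, Or.inl ⟨by rw [hca'], by rw [hcb']⟩⟩
      · left; rw [h3]; norm_num
      · exact Or.inr ⟨by rw [h3]; norm_num,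
          hn1, ra, Or.inr h3, Or.inl ⟨by rw [hca'], by rw [hcb']⟩⟩
    · -- cb ≤ K < ca
      have hc1 : cb.val + 1 = ca.val := by omega
      have hcbk : cb.val = K := by omega
      have hn1 : K + 1 < n := by
        have := ca.isLt; omega
      rw [if_neg hca, if_pos hcb, zero_add]
      have hpow : (-1 : ℤ) ^ (ra.val + cb.val) = (-1) ^ ra.val := by
        rw [hcbk, pow_add, hK.neg_one_pow, mul_one]
      rw [hpow]
      have hcb' : cb = ⟨K, hKn⟩ := Fin.ext hcbk
      have hca' : ca = ⟨K + 1, hn1⟩ := Fin.ext (show ca.val = K + 1 by omega)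
      have h3 : ra.val = 0 ∨ ra.val = 1 ∨ ra.val = 2 := by omega
      rcases h3 with h3 | h3 | h3
      · exact Or.inr ⟨by rw [h3]; norm_num,
          hn1, ra, Or.inl h3, Or.inr ⟨by rw [hcb'], by rw [hca']⟩⟩
      · left; rw [h3]; norm_num
      · exact Or.inr ⟨by rw [h3]; norm_num,
          hn1, ra, Or.inr h3, Or.inr ⟨by rw [hcb'], by rw [hca']⟩⟩
    · left
      rw [if_neg hca, if_neg hcb]
      norm_num


lemma path_ends_ne {V : Type*} {G : SimpleGraph V} {u v : V} (q : G.Walk u v)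
    (hq : q.IsPath) (hl : 1 ≤ q.length) : u ≠ v := by
  intro huv
  subst huv
  cases q with
  | nil => simp at hl
  | cons h q' =>
    rw [SimpleGraph.Walk.cons_isPath_iff] at hq
    exact hq.2 q'.end_mem_support

end Stmt7Aux

/-- There is no path cover `F` of `P₃ □ Pₙ` with: (i) all endvertices in the middle
row; (ii) `(2,k)` an endvertex for some odd `k` with `(2,k−1)` not an endvertex;
(iii) for every odd `i < k`, `(2,i)` is an endvertex iff `(2,i−1)` is. Rows and
columns are `0`-indexed, so "odd" (1-indexed) becomes `Odd (·.val + 1)` and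
"`i − 1`" is a `j` with `j.val + 1 = i.val`. -/
theorem stmt7 (n : ℕ) :
    ¬ ∃ F : Set (Σ u v : Fin 3 × Fin n, (pathGraph 3 □ pathGraph n).Walk u v),
      (pathGraph 3 □ pathGraph n).IsPathCover F ∧
      (∀ x ∈ (pathGraph 3 □ pathGraph n).pcEnds F, x.1 = (1 : Fin 3)) ∧
      ∃ k j : Fin n, j.val + 1 = k.val ∧ Odd (k.val + 1) ∧
        ((1 : Fin 3), k) ∈ (pathGraph 3 □ pathGraph n).pcEnds F ∧
        ((1 : Fin 3), j) ∉ (pathGraph 3 □ pathGraph n).pcEnds F ∧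
        (∀ i i' : Fin n, i'.val + 1 = i.val → i.val < k.val → Odd (i.val + 1) →
          (((1 : Fin 3), i) ∈ (pathGraph 3 □ pathGraph n).pcEnds F ↔
           ((1 : Fin 3), i') ∈ (pathGraph 3 □ pathGraph n).pcEnds F)) := by
  classical
  rintro ⟨F, ⟨hpaths, hdisj, hcov⟩, hmid, k, j, hjk, hkodd, hkE, hjE, hiff⟩
  have hkev : k.val % 2 = 0 := by
    have := Nat.odd_iff.mp hkodd; omega
  have hkeven : Even k.val := Nat.even_iff.mpr hkev
  have hk2 : 2 ≤ k.val := by omega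
  have hkn : k.val < n := k.isLt
  set w := Stmt7Aux.wfun n k.val with hwdef
  -- endpoints of a path are distinct
  have hne : ∀ p ∈ F, p.1 ≠ p.2.1 := fun p hp =>
    Stmt7Aux.path_ends_ne p.2.2 (hpaths p hp).1 (hpaths p hp).2
  -- F is finite
  have hFfin : F.Finite := by
    apply Set.Finite.of_finite_image (f := fun p => p.1) (Set.toFinite _)
    intro p hp q hq hpq
    by_contra hne'
    exact hdisj p hp q hq hne' p.1 p.2.2.start_mem_support
      (by rw [show p.1 = q.1 from hpq]; exact q.2.2.start_mem_support)
  set F' : Finset _ := hFfin.toFinset with hF'def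
  have hmemF' : ∀ p, p ∈ F' ↔ p ∈ F := fun p => hFfin.mem_toFinset
  have hnodup : ∀ p ∈ F', p.2.2.support.Nodup := fun p hp =>
    ((hpaths p ((hmemF' p).mp hp)).1).support_nodup
  -- supports partition the vertex set
  have hdisjFin : (↑F' : Set (Σ u v : Fin 3 × Fin n, (pathGraph 3 □ pathGraph n).Walk u v)).PairwiseDisjoint
      (fun p => p.2.2.support.toFinset) := by
    intro p hp q hq hpq
    refine Finset.disjoint_left.mpr ?_
    intro x hxp hxq
    rw [List.mem_toFinset] at hxp hxq
    exact hdisj p ((hmemF' p).mp hp) q ((hmemF' q).mp hq) hpq x hxp hxq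
  have hcovF : (Finset.univ : Finset (Fin 3 × Fin n)) =
      F'.biUnion (fun p => p.2.2.support.toFinset) := by
    ext v
    simp only [Finset.mem_univ, true_iff, Finset.mem_biUnion, List.mem_toFinset, hmemF']
    exact hcov v
  have hsum1 : ∑ v : Fin 3 × Fin n, w v = ∑ p ∈ F', (p.2.2.support.map w).sum := by
    rw [show (Finset.univ : Finset (Fin 3 × Fin n)) = _ from hcovF,
      Finset.sum_biUnion hdisjFin]
    exact Finset.sum_congr rfl fun p hp => List.sum_toFinset w (hnodup p hp)
  -- master identity
  have hmaster : (2 : ℤ) = (∑ p ∈ F', (w p.1 + w p.2.1)) +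
      (∑ p ∈ F', Stmt7Aux.esum w p.2.2.support) := by
    calc (2 : ℤ) = 2 * ∑ v : Fin 3 × Fin n, w v := by
          rw [hwdef, Stmt7Aux.sum_wfun n k.val hkeven hkn]; ring
      _ = 2 * ∑ p ∈ F', (p.2.2.support.map w).sum := by rw [hsum1]
      _ = ∑ p ∈ F', 2 * (p.2.2.support.map w).sum := by rw [Finset.mul_sum]
      _ = ∑ p ∈ F', (w p.1 + w p.2.1 + Stmt7Aux.esum w p.2.2.support) :=
          Finset.sum_congr rfl fun p _ => Stmt7Aux.walk_esum w p.2.2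
      _ = _ := by rw [← Finset.sum_add_distrib]
  -- the two special vertices
  set x0 : Fin 3 × Fin n := ((0 : Fin 3), k) with hx0def
  set x2 : Fin 3 × Fin n := ((2 : Fin 3), k) with hx2def
  have hkmk : (⟨k.val, hkn⟩ : Fin n) = k := Fin.ext rfl
  -- the crossing-edge characterization
  obtain ⟨y0, y2, hch⟩ : ∃ y0 y2 : Fin 3 × Fin n,
      ∀ a b, (pathGraph 3 □ pathGraph n).Adj a b → w a + w b ≤ 0 ∨ (w a + w b ≤ 1 ∧
        ((a = x0 ∧ b = y0) ∨ (a = y0 ∧ b = x0) ∨ (a = x2 ∧ b = y2) ∨ (a = y2 ∧ b = x2))) := by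
    by_cases hk1 : k.val + 1 < n
    · refine ⟨((0 : Fin 3), ⟨k.val + 1, hk1⟩), ((2 : Fin 3), ⟨k.val + 1, hk1⟩), ?_⟩
      intro a b hadj
      rcases Stmt7Aux.charCore n k.val hkeven hkn a b hadj with h | ⟨heq, h', r, hr02, hcase⟩
      · exact Or.inl h
      · right
        refine ⟨le_of_eq heq, ?_⟩
        rcases hr02 with hr | hr
        · have hr' : r = (0 : Fin 3) := Fin.ext hr
          subst hr'
          rcases hcase with ⟨h1, h2⟩ | ⟨h1, h2⟩
          · exact Or.inl ⟨by rw [h1, hkmk], h2⟩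
          · exact Or.inr (Or.inl ⟨by rw [h2], by rw [h1, hkmk]⟩)
        · have hr' : r = (2 : Fin 3) := Fin.ext hr
          subst hr'
          rcases hcase with ⟨h1, h2⟩ | ⟨h1, h2⟩
          · exact Or.inr (Or.inr (Or.inl ⟨by rw [h1, hkmk], h2⟩))
          · exact Or.inr (Or.inr (Or.inr ⟨by rw [h2], by rw [h1, hkmk]⟩))
    · refine ⟨((1 : Fin 3), k), ((1 : Fin 3), k), ?_⟩
      intro a b hadj
      rcases Stmt7Aux.charCore n k.val hkeven hkn a b hadj with h | ⟨-, h', -⟩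
      · exact Or.inl h
      · exact absurd h' hk1
  -- bound on the edge sum
  have hBp : ∀ p ∈ F', Stmt7Aux.esum w p.2.2.support ≤
      (if x0 ∈ p.2.2.support then (1 : ℤ) else 0) +
      (if x2 ∈ p.2.2.support then (1 : ℤ) else 0) := by
    intro p hp
    refine le_trans (Stmt7Aux.esum_le_core w _ x0 y0 x2 y2 hch p.2.2.support
      p.2.2.isChain_adj_support (hnodup p hp)) (add_le_add ?_ ?_) <;> split_ifs with h
    exacts [Stmt7Aux.Hnd_le_one _ _ _, le_of_eq (Stmt7Aux.Hnd_eq_zero h _),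
      Stmt7Aux.Hnd_le_one _ _ _, le_of_eq (Stmt7Aux.Hnd_eq_zero h _)]
  have hcard : ∀ x : Fin 3 × Fin n,
      (∑ p ∈ F', if x ∈ p.2.2.support then (1 : ℤ) else 0) ≤ 1 := by
    intro x
    rw [Finset.sum_boole]
    have h1 : (F'.filter (fun p => x ∈ p.2.2.support)).card ≤ 1 := by
      rw [Finset.card_le_one]
      intro p hp q hq
      simp only [Finset.mem_filter] at hp hq
      by_contra hpq
      exact hdisj p ((hmemF' p).mp hp.1) q ((hmemF' q).mp hq.1) hpq x hp.2 hq.2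
    exact_mod_cast h1
  have hB : (∑ p ∈ F', Stmt7Aux.esum w p.2.2.support) ≤ 2 := by
    calc ∑ p ∈ F', Stmt7Aux.esum w p.2.2.support
        ≤ ∑ p ∈ F', ((if x0 ∈ p.2.2.support then (1 : ℤ) else 0) +
            (if x2 ∈ p.2.2.support then (1 : ℤ) else 0)) := Finset.sum_le_sum hBp
      _ = (∑ p ∈ F', if x0 ∈ p.2.2.support then (1 : ℤ) else 0) +
          (∑ p ∈ F', if x2 ∈ p.2.2.support then (1 : ℤ) else 0) := Finset.sum_add_distrib
      _ ≤ 1 + 1 := add_le_add (hcard x0) (hcard x2)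
      _ = 2 := by norm_num
  -- the endpoint set
  set E : Finset (Fin 3 × Fin n) := F'.biUnion (fun p => {p.1, p.2.1}) with hEdef
  have hdisjE : (↑F' : Set (Σ u v : Fin 3 × Fin n, (pathGraph 3 □ pathGraph n).Walk u v)).PairwiseDisjoint
      (fun p => ({p.1, p.2.1} : Finset (Fin 3 × Fin n))) := by
    intro p hp q hq hpq
    refine Finset.disjoint_left.mpr ?_
    intro x hxp hxq
    simp only [Finset.mem_insert, Finset.mem_singleton] at hxp hxq
    have hxps : x ∈ p.2.2.support := by
      rcases hxp with rfl | rfl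
      exacts [p.2.2.start_mem_support, p.2.2.end_mem_support]
    have hxqs : x ∈ q.2.2.support := by
      rcases hxq with rfl | rfl
      exacts [q.2.2.start_mem_support, q.2.2.end_mem_support]
    exact hdisj p ((hmemF' p).mp hp) q ((hmemF' q).mp hq) hpq x hxps hxqs
  have hA1 : (∑ p ∈ F', (w p.1 + w p.2.1)) = ∑ x ∈ E, w x := by
    rw [hEdef, Finset.sum_biUnion hdisjE]
    refine Finset.sum_congr rfl fun p hp => ?_
    rw [Finset.sum_pair (hne p ((hmemF' p).mp hp))]
  have hEmem : ∀ x, x ∈ E ↔ x ∈ (pathGraph 3 □ pathGraph n).pcEnds F := by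
    intro x
    simp only [hEdef, Finset.mem_biUnion, Finset.mem_insert, Finset.mem_singleton, hmemF']
    constructor
    · rintro ⟨p, hp, rfl | rfl⟩
      exacts [⟨p, hp, Or.inl rfl⟩, ⟨p, hp, Or.inr rfl⟩]
    · rintro ⟨p, hp, h | h⟩
      exacts [⟨p, hp, Or.inl h.symm⟩, ⟨p, hp, Or.inr h.symm⟩]
  have hrow : ∀ x ∈ E, x.1 = (1 : Fin 3) := fun x hx => hmid x ((hEmem x).mp hx)
  set S : Finset (Fin n) := E.image Prod.snd with hSdef
  have hSmem : ∀ c, c ∈ S ↔ ((1 : Fin 3), c) ∈ (pathGraph 3 □ pathGraph n).pcEnds F := by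
    intro c
    rw [hSdef, Finset.mem_image]
    constructor
    · rintro ⟨x, hx, rfl⟩
      have h1 := hrow x hx
      have h2 : x = ((1 : Fin 3), x.2) := Prod.ext h1 rfl
      rw [← h2]
      exact (hEmem x).mp hx
    · intro h
      exact ⟨((1 : Fin 3), c), (hEmem _).mpr h, rfl⟩
  have hA2 : (∑ c ∈ S, w ((1 : Fin 3), c)) = ∑ x ∈ E, w x := by
    rw [hSdef, Finset.sum_image (fun x hx y hy hxy =>
      Prod.ext (by rw [hrow x hx, hrow y hy]) hxy)]
    exact Finset.sum_congr rfl fun x hx => by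
      rw [show ((1 : Fin 3), x.2) = x from Prod.ext (hrow x hx).symm rfl]
  have hw1 : ∀ c : Fin n, w ((1 : Fin 3), c) =
      -(if c.val ≤ k.val then (-1 : ℤ) ^ c.val else 0) := by
    intro c
    rw [hwdef]
    unfold Stmt7Aux.wfun
    dsimp only
    split_ifs with h
    · show (-1 : ℤ) ^ (1 + c.val) = -(-1) ^ c.val
      rw [pow_add, pow_one]; ring
    · ring
  -- the endpoint-column sum is at least 1
  have hS1 : 1 ≤ ∑ c ∈ S, (if c.val ≤ k.val then (-1 : ℤ) ^ c.val else 0) := by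
    rw [← Finset.sum_filter]
    rw [← Finset.sum_filter_add_sum_filter_not (S.filter (fun c => c.val ≤ k.val))
        (fun c => 1 ≤ c.val ∧ c.val + 2 ≤ k.val) (fun c => (-1 : ℤ) ^ c.val)]
    have hTfacts : ∀ a ∈ (S.filter (fun c => c.val ≤ k.val)).filter
        (fun c => 1 ≤ c.val ∧ c.val + 2 ≤ k.val), a ∈ S ∧ 1 ≤ a.val ∧ a.val + 2 ≤ k.val := by
      intro a ha
      simp only [Finset.mem_filter] at ha
      exact ⟨ha.1.1, ha.2.1, ha.2.2⟩
    have hbound : ∀ a ∈ (S.filter (fun c => c.val ≤ k.val)).filter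
        (fun c => 1 ≤ c.val ∧ c.val + 2 ≤ k.val),
        (if Odd a.val then a.val + 1 else a.val - 1) < n := by
      intro a ha
      have h := hTfacts a ha
      split_ifs <;> omega
    set T := (S.filter (fun c => c.val ≤ k.val)).filter
        (fun c => 1 ≤ c.val ∧ c.val + 2 ≤ k.val) with hTdef
    have hTeq : (∑ c ∈ T, (-1 : ℤ) ^ c.val) = 0 := by
      let g : ∀ a ∈ T, Fin n := fun a ha =>
        ⟨if Odd a.val then a.val + 1 else a.val - 1, hbound a ha⟩
      have hgval : ∀ a (ha : a ∈ T), (g a ha).val =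
          if Odd a.val then a.val + 1 else a.val - 1 := fun _ _ => rfl
      have hgmem : ∀ a (ha : a ∈ T), g a ha ∈ T := by
        intro a ha
        obtain ⟨haS, h1a, h2a⟩ := hTfacts a ha
        rw [hTdef]
        simp only [Finset.mem_filter]
        by_cases hodd : Odd a.val
        · have hv : (g a ha).val = a.val + 1 := by rw [hgval a ha, if_pos hodd]
          have hod : a.val % 2 = 1 := Nat.odd_iff.mp hodd
          have hmemS : g a ha ∈ S := by
            refine (hSmem _).mpr ((hiff (g a ha) a hv.symm (by rw [hv]; omega)
              (by rw [hv]; exact Nat.odd_iff.mpr (by omega))).mpr ((hSmem a).mp haS))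
          exact ⟨⟨hmemS, by rw [hv]; omega⟩, by rw [hv]; omega,
            by rw [hv]; omega⟩
        · have hv : (g a ha).val = a.val - 1 := by rw [hgval a ha, if_neg hodd]
          have hod : a.val % 2 = 0 := by
            rw [Nat.odd_iff] at hodd; omega
          have hmemS : g a ha ∈ S := by
            refine (hSmem _).mpr ((hiff a (g a ha) (by rw [hv]; omega) (by omega)
              (Nat.odd_iff.mpr (by omega))).mp ((hSmem a).mp haS))
          exact ⟨⟨hmemS, by rw [hv]; omega⟩, by rw [hv]; omega,
            by rw [hv]; omega⟩
      refine Finset.sum_involution g ?_ ?_ hgmem ?_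
      · intro a ha
        by_cases hodd : Odd a.val
        · have hv : (g a ha).val = a.val + 1 := by rw [hgval a ha, if_pos hodd]
          show (-1 : ℤ) ^ a.val + (-1 : ℤ) ^ (g a ha).val = 0
          rw [hv, pow_succ]; ring
        · have h1a := (hTfacts a ha).2.1
          have hv : (g a ha).val = a.val - 1 := by rw [hgval a ha, if_neg hodd]
          obtain ⟨m, hm⟩ : ∃ m, a.val = m + 1 := ⟨a.val - 1, by omega⟩
          have hv' : (g a ha).val = m := by omega
          show (-1 : ℤ) ^ a.val + (-1 : ℤ) ^ (g a ha).val = 0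
          rw [hv', hm, pow_succ]; ring
      · intro a ha _
        have h1a := (hTfacts a ha).2.1
        apply Fin.ne_of_val_ne
        rw [hgval a ha]
        split_ifs <;> omega
      · intro a ha
        apply Fin.ext
        by_cases hodd : Odd a.val
        · have hv : (g a ha).val = a.val + 1 := by rw [hgval a ha, if_pos hodd]
          have hod : a.val % 2 = 1 := Nat.odd_iff.mp hodd
          have hnodd : ¬ Odd ((g a ha).val) := by rw [hv, Nat.odd_iff]; omega
          rw [hgval (g a ha) (hgmem a ha), if_neg hnodd, hv]
          omega
        · have h1a := (hTfacts a ha).2.1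
          have hod : a.val % 2 = 0 := by rw [Nat.odd_iff] at hodd; omega
          have hv : (g a ha).val = a.val - 1 := by rw [hgval a ha, if_neg hodd]
          have hodd' : Odd ((g a ha).val) := by rw [hv, Nat.odd_iff]; omega
          rw [hgval (g a ha) (hgmem a ha), if_pos hodd', hv]
          omega
    have hLat : ∀ c ∈ (S.filter (fun c => c.val ≤ k.val)).filter
        (fun c => ¬(1 ≤ c.val ∧ c.val + 2 ≤ k.val)), (-1 : ℤ) ^ c.val = 1 := by
      intro c hc
      simp only [Finset.mem_filter, not_and, not_le] at hc
      obtain ⟨⟨hcS, hck⟩, hcq⟩ := hc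
      have hcne : c.val + 1 ≠ k.val := by
        intro h
        have hcj : c = j := Fin.ext (by omega)
        exact hjE (hcj ▸ (hSmem c).mp hcS)
      have hcev : c.val % 2 = 0 := by omega
      exact Even.neg_one_pow (Nat.even_iff.mpr hcev)
    have hkL : k ∈ (S.filter (fun c => c.val ≤ k.val)).filter
        (fun c => ¬(1 ≤ c.val ∧ c.val + 2 ≤ k.val)) := by
      simp only [Finset.mem_filter, not_and, not_le]
      exact ⟨⟨(hSmem k).mpr hkE, le_refl _⟩, by omega⟩
    have hLsum : (∑ c ∈ (S.filter (fun c => c.val ≤ k.val)).filter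
        (fun c => ¬(1 ≤ c.val ∧ c.val + 2 ≤ k.val)), (-1 : ℤ) ^ c.val) =
        (((S.filter (fun c => c.val ≤ k.val)).filter
        (fun c => ¬(1 ≤ c.val ∧ c.val + 2 ≤ k.val))).card : ℤ) := by
      rw [Finset.sum_congr rfl hLat, Finset.sum_const, nsmul_eq_mul, mul_one]
    have hLcard : (1 : ℤ) ≤ (((S.filter (fun c => c.val ≤ k.val)).filter
        (fun c => ¬(1 ≤ c.val ∧ c.val + 2 ≤ k.val))).card : ℤ) := by
      exact_mod_cast Finset.card_pos.mpr ⟨k, hkL⟩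
    rw [hTeq, hLsum, zero_add]
    exact hLcard
  have hA : (∑ p ∈ F', (w p.1 + w p.2.1)) ≤ -1 := by
    rw [hA1, ← hA2, Finset.sum_congr rfl fun c _ => hw1 c, Finset.sum_neg_distrib]
    linarith [hS1]
  linarith [hmaster, hA, hB]
end

section
/- For the tree T_Δ (Δ ≥ 3) defined by: b adjacent to a and c; a₁,...,a_{Δ−1} adjacent to a; c₁,...,c_{Δ−1} adjacent to c; and leaves uᵢ,vᵢ adjacent to aᵢ and yᵢ,zᵢ adjacent to cᵢ; the product T_Δ □ Pₘ is not hamiltonian for every m ≤ 4Δ − 3. -/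
open SimpleGraph

/-- The vertices of the tree `T_Δ`: the centre path `a, b, c`, vertices `aᵢ` (here `A i`)
adjacent to `a`, vertices `cᵢ` (here `C i`) adjacent to `c`, leaves `uᵢ, vᵢ` adjacent to
`aᵢ` and leaves `yᵢ, zᵢ` adjacent to `cᵢ`, for `i = 1, …, Δ−1`. -/
inductive TV (Δ : ℕ) where
  | a | b | c
  | A (i : Fin (Δ - 1)) | C (i : Fin (Δ - 1))
  | u (i : Fin (Δ - 1)) | v (i : Fin (Δ - 1))
  | y (i : Fin (Δ - 1)) | z (i : Fin (Δ - 1))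
  deriving DecidableEq, Fintype

/-- The edges of the tree `T_Δ`. -/
def Trel (Δ : ℕ) : TV Δ → TV Δ → Prop := fun x y =>
  (x = .a ∧ y = .b) ∨ (x = .b ∧ y = .c) ∨
  (∃ i, (x = .a ∧ y = .A i) ∨ (x = .c ∧ y = .C i) ∨
        (x = .A i ∧ y = .u i) ∨ (x = .A i ∧ y = .v i) ∨
        (x = .C i ∧ y = .y i) ∨ (x = .C i ∧ y = .z i))

/-- The tree `T_Δ`. -/
def Tgraph (Δ : ℕ) : SimpleGraph (TV Δ) := SimpleGraph.fromRel (Trel Δ)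

namespace Stmt10Aux
variable {V : Type*} [DecidableEq V] {G : SimpleGraph V}

lemma dart_edge_mem {u v : V} {p : G.Walk u v} {d : G.Dart} (hd : d ∈ p.darts) :
    s(d.toProd.1, d.toProd.2) ∈ p.edges := by
  have : d.edge ∈ p.darts.map SimpleGraph.Dart.edge := List.mem_map_of_mem hd
  have he : d.edge = s(d.toProd.1, d.toProd.2) := rfl
  rw [← he]
  exact this

omit [DecidableEq V] in
lemma last_nbr : ∀ {y x : V} (r : G.Walk y x), r.support.Nodup → y ≠ x →
    ∃ u, s(u, x) ∈ r.edges ∧ ∀ w, s(x, w) ∈ r.edges → w = u := by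
  intro y x r
  induction r with
  | nil => intro _ hne; exact absurd rfl hne
  | @cons y z x h r' ih =>
    intro hnd hne
    rw [SimpleGraph.Walk.support_cons, List.nodup_cons] at hnd
    cases r' with
    | nil =>
      refine ⟨y, ?_, ?_⟩
      · simp [Sym2.eq_swap]
      · intro w hw
        simp only [SimpleGraph.Walk.edges_cons, SimpleGraph.Walk.edges_nil, List.mem_cons,
          List.not_mem_nil, or_false] at hw
        rcases Sym2.eq_iff.mp hw with ⟨h1, _⟩ | ⟨_, h2⟩
        · exact absurd h1.symm hne
        · exact h2
    | cons h' r'' =>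
      have hzx : z ≠ x := by
        intro hzz
        have hxm : x ∈ r''.support := SimpleGraph.Walk.end_mem_support r''
        rw [SimpleGraph.Walk.support_cons, List.nodup_cons] at hnd
        exact hnd.2.1 (hzz ▸ hxm)
      obtain ⟨u, hu1, hu2⟩ := ih hnd.2 hzx
      refine ⟨u, ?_, ?_⟩
      · rw [SimpleGraph.Walk.edges_cons]
        exact List.mem_cons_of_mem _ hu1
      · intro w hw
        rw [SimpleGraph.Walk.edges_cons] at hw
        rcases List.mem_cons.mp hw with hw | hw
        · exfalso
          rcases Sym2.eq_iff.mp hw with ⟨h1, _⟩ | ⟨h1, _⟩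
          · exact hne h1.symm
          · exact hzx h1.symm
        · exact hu2 w hw

lemma two_nbrs {v : V} {p : G.Walk v v} (hp : p.IsHamiltonianCycle) (x : V) :
    ∃ u₁ u₂, u₁ ≠ u₂ ∧ ∀ w, (s(x, w) ∈ p.edges ↔ w = u₁ ∨ w = u₂) := by
  have hx : x ∈ p.support := hp.mem_support x
  have hqc : (p.rotate x hx).IsCycle := hp.isCycle.rotate hx
  have hedges : ∀ e, e ∈ (p.rotate x hx).edges ↔ e ∈ p.edges :=
    fun e => (p.rotate_edges x hx).perm.mem_iff
  rcases hq2 : p.rotate x hx with _ | ⟨hadj, q₁⟩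
  · rw [hq2] at hqc; exact absurd rfl hqc.ne_nil
  · rename_i z
    rw [hq2] at hqc hedges
    have hnd : q₁.support.Nodup := by
      have h3 := hqc.support_nodup
      rwa [SimpleGraph.Walk.support_cons, List.tail_cons] at h3
    have hzx : z ≠ x := hadj.ne'
    obtain ⟨u, hu1, hu2⟩ := last_nbr q₁ hnd hzx
    have htrail : (SimpleGraph.Walk.cons hadj q₁).edges.Nodup := hqc.edges_nodup
    rw [SimpleGraph.Walk.edges_cons, List.nodup_cons] at htrail
    refine ⟨z, u, ?_, ?_⟩
    · rintro rfl
      exact htrail.1 (by rwa [Sym2.eq_swap] at hu1)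
    · intro w
      rw [← hedges, SimpleGraph.Walk.edges_cons]
      constructor
      · intro hw
        rcases List.mem_cons.mp hw with hw | hw
        · exact Or.inl (Sym2.congr_right.mp hw)
        · exact Or.inr (hu2 w hw)
      · rintro (rfl | rfl)
        · exact List.mem_cons_self
        · exact List.mem_cons_of_mem _ (by rwa [Sym2.eq_swap] at hu1)

lemma two_cross {v : V} {p : G.Walk v v} (hp : p.IsHamiltonianCycle)
    (S : Set V) {x y : V} (hx : x ∈ S) (hy : y ∉ S) :
    ∃ z₁ w₁ z₂ w₂, s(z₁, w₁) ∈ p.edges ∧ s(z₂, w₂) ∈ p.edges ∧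
      z₁ ∈ S ∧ w₁ ∉ S ∧ z₂ ∈ S ∧ w₂ ∉ S ∧ s(z₁, w₁) ≠ s(z₂, w₂) := by
  have hxs : x ∈ p.support := hp.mem_support x
  have hqc : (p.rotate x hxs).IsCycle := hp.isCycle.rotate hxs
  have hedges : ∀ e, e ∈ (p.rotate x hxs).edges ↔ e ∈ p.edges :=
    fun e => (p.rotate_edges x hxs).perm.mem_iff
  have hys : y ∈ (p.rotate x hxs).support := by
    have h1 : y ∈ p.support.tail := by
      have h2 : p.support.tail.count y = 1 := by
        have := hp.isHamiltonian_tail y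
        rwa [SimpleGraph.Walk.support_tail_of_not_nil p hp.isCycle.not_nil] at this
      exact List.count_pos_iff.mp (by omega)
    exact List.mem_of_mem_tail ((SimpleGraph.Walk.support_rotate p x hxs).perm.mem_iff.mpr h1)
  have hspec := SimpleGraph.Walk.take_spec (p.rotate x hxs) hys
  obtain ⟨d₁, hd₁, hd₁S⟩ :=
    ((p.rotate x hxs).takeUntil y hys).exists_boundary_dart S hx hy
  obtain ⟨d₂, hd₂, hd₂S⟩ :=
    ((p.rotate x hxs).dropUntil y hys).exists_boundary_dart Sᶜ hy (by simpa using hx)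
  refine ⟨d₁.toProd.1, d₁.toProd.2, d₂.toProd.2, d₂.toProd.1, ?_, ?_, hd₁S.1, hd₁S.2,
    by simpa using hd₂S.2, hd₂S.1, ?_⟩
  · apply (hedges _).mp
    rw [← hspec, SimpleGraph.Walk.edges_append, List.mem_append]
    exact Or.inl (dart_edge_mem hd₁)
  · apply (hedges _).mp
    rw [← hspec, SimpleGraph.Walk.edges_append, List.mem_append]
    refine Or.inr ?_
    rw [Sym2.eq_swap]
    exact dart_edge_mem hd₂
  · intro hcon
    have hnd : (p.rotate x hxs).edges.Nodup := hqc.edges_nodup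
    rw [← hspec, SimpleGraph.Walk.edges_append] at hnd
    have hdisj := List.disjoint_of_nodup_append hnd
    apply hdisj (dart_edge_mem hd₁)
    have : s(d₁.toProd.1, d₁.toProd.2) = s(d₂.toProd.1, d₂.toProd.2) := by
      rw [hcon, Sym2.eq_swap]
    rw [this]
    exact dart_edge_mem hd₂


open Finset

variable {Δ : ℕ}

/-- The bipartition class: `true` on `b`, `Aᵢ`, `Cᵢ`. -/
def cls : TV Δ → Bool
  | .b => true | .A _ => true | .C _ => true | _ => false

lemma tadj {x y : TV Δ} : (Tgraph Δ).Adj x y ↔ x ≠ y ∧ (Trel Δ x y ∨ Trel Δ y x) :=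
  SimpleGraph.fromRel_adj _ _ _

lemma cls_ne {x y : TV Δ} (h : (Tgraph Δ).Adj x y) : cls x ≠ cls y := by
  obtain ⟨hne, h | h⟩ := tadj.mp h <;>
    rcases h with ⟨rfl, rfl⟩ | ⟨rfl, rfl⟩ |
      ⟨i, ⟨rfl, rfl⟩ | ⟨rfl, rfl⟩ | ⟨rfl, rfl⟩ | ⟨rfl, rfl⟩ | ⟨rfl, rfl⟩ | ⟨rfl, rfl⟩⟩ <;>
    simp [cls]

lemma adj_b {w : TV Δ} (h : (Tgraph Δ).Adj .b w) : w = .a ∨ w = .c := by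
  obtain ⟨hne, h | h⟩ := tadj.mp h <;>
    rcases h with ⟨h1, h2⟩ | ⟨h1, h2⟩ |
      ⟨i, ⟨h1, h2⟩ | ⟨h1, h2⟩ | ⟨h1, h2⟩ | ⟨h1, h2⟩ | ⟨h1, h2⟩ | ⟨h1, h2⟩⟩ <;>
    simp_all

lemma adj_branch {i : Fin (Δ - 1)} {x w : TV Δ} (h : (Tgraph Δ).Adj x w)
    (hx : x = .A i ∨ x = .u i ∨ x = .v i) (hw : ¬(w = .A i ∨ w = .u i ∨ w = .v i)) :
    x = .A i ∧ w = .a := by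
  obtain ⟨hne, h | h⟩ := tadj.mp h <;>
    rcases h with ⟨h1, h2⟩ | ⟨h1, h2⟩ |
      ⟨j, ⟨h1, h2⟩ | ⟨h1, h2⟩ | ⟨h1, h2⟩ | ⟨h1, h2⟩ | ⟨h1, h2⟩ | ⟨h1, h2⟩⟩ <;>
    simp_all

lemma adj_branchC {i : Fin (Δ - 1)} {x w : TV Δ} (h : (Tgraph Δ).Adj x w)
    (hx : x = .C i ∨ x = .y i ∨ x = .z i) (hw : ¬(w = .C i ∨ w = .y i ∨ w = .z i)) :
    x = .C i ∧ w = .c := by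
  obtain ⟨hne, h | h⟩ := tadj.mp h <;>
    rcases h with ⟨h1, h2⟩ | ⟨h1, h2⟩ |
      ⟨j, ⟨h1, h2⟩ | ⟨h1, h2⟩ | ⟨h1, h2⟩ | ⟨h1, h2⟩ | ⟨h1, h2⟩ | ⟨h1, h2⟩⟩ <;>
    simp_all

def Xs (Δ : ℕ) : Finset (TV Δ) := univ.filter (fun w => cls w = true)
def Ys (Δ : ℕ) : Finset (TV Δ) := univ.filter (fun w => cls w = false)

lemma A_inj : Function.Injective (TV.A : Fin (Δ - 1) → TV Δ) := by
  intro i j h; injection h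
lemma C_inj : Function.Injective (TV.C : Fin (Δ - 1) → TV Δ) := by
  intro i j h; injection h
lemma u_inj : Function.Injective (TV.u : Fin (Δ - 1) → TV Δ) := by
  intro i j h; injection h
lemma v_inj : Function.Injective (TV.v : Fin (Δ - 1) → TV Δ) := by
  intro i j h; injection h
lemma y_inj : Function.Injective (TV.y : Fin (Δ - 1) → TV Δ) := by
  intro i j h; injection h
lemma z_inj : Function.Injective (TV.z : Fin (Δ - 1) → TV Δ) := by
  intro i j h; injection h

lemma Xs_eq : Xs Δ = insert .b ((univ.image TV.A) ∪ (univ.image TV.C)) := by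
  ext w
  simp only [Xs, mem_filter, mem_univ, true_and]
  cases w <;> simp [cls, mem_image]

lemma Ys_eq : Ys Δ = insert .a (insert .c
    ((univ.image TV.u) ∪ (univ.image TV.v) ∪ (univ.image TV.y) ∪ (univ.image TV.z))) := by
  ext w
  simp only [Ys, mem_filter, mem_univ, true_and]
  cases w <;> simp [cls, mem_image]

lemma card_Xs : (Xs Δ).card = 1 + 2 * (Δ - 1) := by
  rw [Xs_eq, card_insert_of_notMem (by simp), card_union_of_disjoint (by
    simp [Finset.disjoint_left])]
  simp [Finset.card_image_of_injective _ A_inj, Finset.card_image_of_injective _ C_inj]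
  ring

lemma card_Ys : (Ys Δ).card = 2 + 4 * (Δ - 1) := by
  rw [Ys_eq, card_insert_of_notMem (by simp), card_insert_of_notMem (by simp)]
  rw [card_union_of_disjoint (by simp [Finset.disjoint_left] <;> aesop),
      card_union_of_disjoint (by simp [Finset.disjoint_left] <;> aesop),
      card_union_of_disjoint (by simp [Finset.disjoint_left] <;> aesop)]
  simp [Finset.card_image_of_injective _ u_inj, Finset.card_image_of_injective _ v_inj,
    Finset.card_image_of_injective _ y_inj, Finset.card_image_of_injective _ z_inj]
  ring

section Core
open scoped Classical

variable {Δ m : ℕ}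

noncomputable def vert (B : TV Δ × Fin m → TV Δ × Fin m → Prop) (w : TV Δ) (j : ℕ) : ℕ :=
  if h : 1 ≤ j ∧ j < m then
    (if B (w, ⟨j - 1, by omega⟩) (w, ⟨j, h.2⟩) then 1 else 0)
  else 0

noncomputable def hdeg (B : TV Δ × Fin m → TV Δ × Fin m → Prop) (w : TV Δ) (r : Fin m) : ℕ :=
  ((univ : Finset (TV Δ)).filter (fun w' => B (w, r) (w', r))).card

noncomputable def cross (B : TV Δ × Fin m → TV Δ × Fin m → Prop) (w w' : TV Δ) : ℕ :=
  ((univ : Finset (Fin m)).filter (fun r => B (w, r) (w', r))).card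

noncomputable def Dd (B : TV Δ × Fin m → TV Δ × Fin m → Prop) (j : ℕ) : ℤ :=
  ((Ys Δ).sum fun w => (vert B w j : ℤ)) - ((Xs Δ).sum fun w => (vert B w j : ℤ))

variable {B : TV Δ × Fin m → TV Δ × Fin m → Prop}

lemma vert_le_one (w : TV Δ) (j : ℕ) : vert B w j ≤ 1 := by
  unfold vert; split_ifs <;> omega

lemma vert_of_not (w : TV Δ) {j : ℕ} (h : ¬(1 ≤ j ∧ j < m)) : vert B w j = 0 := dif_neg h

lemma cross_symm (hsymm : ∀ z w, B z w → B w z) (w w' : TV Δ) :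
    cross B w w' = cross B w' w := by
  unfold cross
  congr 1
  ext r
  simp only [mem_filter, mem_univ, true_and]
  exact ⟨hsymm _ _, hsymm _ _⟩

variable (hsymm : ∀ z w, B z w → B w z)
  (hadj : ∀ z w, B z w → (Tgraph Δ □ pathGraph m).Adj z w)
  (hdeg2 : ∀ x, ∃ u₁ u₂, u₁ ≠ u₂ ∧ ∀ w, B x w ↔ w = u₁ ∨ w = u₂)

include hadj in
lemma bcase {w : TV Δ} {r : Fin m} {z : TV Δ × Fin m} (hz : B (w, r) z) :
    (z.2 = r ∧ (Tgraph Δ).Adj w z.1) ∨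
      (z.1 = w ∧ (z.2.val + 1 = r.val ∨ r.val + 1 = z.2.val)) := by
  have h := hadj _ _ hz
  rw [SimpleGraph.boxProd_adj] at h
  rcases h with ⟨h1, h2⟩ | ⟨h1, h2⟩
  · exact Or.inl ⟨h2.symm, h1⟩
  · rw [SimpleGraph.pathGraph_adj] at h1
    exact Or.inr ⟨h2.symm, h1.symm⟩

include hsymm hadj hdeg2 in
lemma degree_split (w : TV Δ) (r : Fin m) :
    hdeg B w r + vert B w r.val + vert B w (r.val + 1) = 2 := by
  classical
  obtain ⟨u₁, u₂, hne, hiff⟩ := hdeg2 (w, r)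
  set N : Finset (TV Δ × Fin m) := univ.filter (fun z => B (w, r) z) with hNdef
  have hNmem : ∀ z, z ∈ N ↔ B (w, r) z := by
    intro z; simp [hNdef]
  have hNcard : N.card = 2 := by
    have : N = {u₁, u₂} := by
      ext z
      rw [hNmem, hiff]
      simp
    rw [this, card_insert_of_notMem (by simp [hne]), card_singleton]
  set Nh := N.filter (fun z => z.2 = r) with hNh
  set Nd := N.filter (fun z => z.2.val + 1 = r.val) with hNd
  set Nu := N.filter (fun z => r.val + 1 = z.2.val) with hNu
  have hmemh : ∀ z, z ∈ Nh ↔ (B (w, r) z ∧ z.2 = r) := by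
    intro z; rw [hNh, mem_filter, hNmem]
  have hmemd : ∀ z, z ∈ Nd ↔ (B (w, r) z ∧ z.2.val + 1 = r.val) := by
    intro z; rw [hNd, mem_filter, hNmem]
  have hmemu : ∀ z, z ∈ Nu ↔ (B (w, r) z ∧ r.val + 1 = z.2.val) := by
    intro z; rw [hNu, mem_filter, hNmem]
  have hdisj1 : Disjoint Nd Nu := by
    rw [Finset.disjoint_left]
    intro z hz1 hz2
    rw [hmemd] at hz1
    rw [hmemu] at hz2
    omega
  have hdisj2 : Disjoint Nh (Nd ∪ Nu) := by
    rw [Finset.disjoint_left]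
    intro z hz1 hz2
    rw [hmemh] at hz1
    rw [mem_union] at hz2
    rcases hz2 with hz2 | hz2
    · rw [hmemd] at hz2
      rw [hz1.2] at hz2
      omega
    · rw [hmemu] at hz2
      rw [hz1.2] at hz2
      omega
  have hunion : Nh ∪ (Nd ∪ Nu) = N := by
    ext z
    rw [mem_union, mem_union, hmemh, hmemd, hmemu, hNmem]
    constructor
    · rintro (⟨h1, _⟩ | ⟨h1, _⟩ | ⟨h1, _⟩) <;> exact h1
    · intro h1
      rcases bcase hadj h1 with ⟨h5, h6⟩ | ⟨h5, h6 | h6⟩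
      · exact Or.inl ⟨h1, h5⟩
      · exact Or.inr (Or.inl ⟨h1, h6⟩)
      · exact Or.inr (Or.inr ⟨h1, h6⟩)
  have hsplit : Nh.card + (Nd.card + Nu.card) = 2 := by
    rw [← card_union_of_disjoint hdisj1, ← card_union_of_disjoint hdisj2, hunion, hNcard]
  have hNhcard : Nh.card = hdeg B w r := by
    rw [hdeg]
    refine Finset.card_bij' (fun z _ => z.1) (fun w' _ => (w', r)) ?hi ?hj ?hleft ?hright
    case hi =>
      intro z hz
      rw [hmemh] at hz
      rw [mem_filter]
      refine ⟨mem_univ _, ?_⟩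
      have hze : z = (z.1, r) := Prod.ext rfl hz.2
      rw [← hze]
      exact hz.1
    case hj =>
      intro w' hw'
      rw [mem_filter] at hw'
      rw [hmemh]
      exact ⟨hw'.2, rfl⟩
    case hleft =>
      intro z hz
      rw [hmemh] at hz
      exact Prod.ext rfl hz.2.symm
    case hright =>
      intro w' hw'
      rfl
  have hNdcard : Nd.card = vert B w r.val := by
    by_cases h0 : 1 ≤ r.val
    · have hrm : r.val < m := r.isLt
      rw [vert, dif_pos (⟨h0, hrm⟩ : 1 ≤ r.val ∧ r.val < m)]
      have hrr : (⟨r.val, hrm⟩ : Fin m) = r := Fin.ext rfl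
      rw [hrr]
      have hNdeq : Nd = if B (w, ⟨r.val - 1, by omega⟩) (w, r)
          then ({(w, ⟨r.val - 1, by omega⟩)} : Finset (TV Δ × Fin m)) else ∅ := by
        ext z
        rw [hmemd]
        constructor
        · rintro ⟨hz1, hz2⟩
          rcases bcase hadj hz1 with ⟨h5, h6⟩ | ⟨h5, h6⟩
          · rw [h5] at hz2; omega
          · have hz2' : z.2 = (⟨r.val - 1, by omega⟩ : Fin m) := by
              apply Fin.ext; simp; omega
            have hzeq : z = (w, (⟨r.val - 1, by omega⟩ : Fin m)) := by
              rw [← h5, ← hz2']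
            rw [hzeq] at hz1
            rw [if_pos (hsymm _ _ hz1)]
            simp [hzeq]
        · intro hz
          split_ifs at hz with hB
          · rw [mem_singleton] at hz
            subst hz
            exact ⟨hsymm _ _ hB, by simp; omega⟩
          · simp at hz
      rw [hNdeq]
      split_ifs with hB
      · exact card_singleton _
      · exact card_empty
    · rw [vert_of_not w (by omega)]
      rw [Finset.card_eq_zero, Finset.filter_eq_empty_iff]
      intro z hz
      omega
  have hNucard : Nu.card = vert B w (r.val + 1) := by
    by_cases h1 : r.val + 1 < m
    · rw [vert, dif_pos (⟨by omega, h1⟩ : 1 ≤ r.val + 1 ∧ r.val + 1 < m)]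
      have hrr : (⟨r.val + 1 - 1, by omega⟩ : Fin m) = r := by
        apply Fin.ext; simp
      rw [hrr]
      have hNueq : Nu = if B (w, r) (w, ⟨r.val + 1, h1⟩)
          then ({(w, (⟨r.val + 1, h1⟩ : Fin m))} : Finset (TV Δ × Fin m)) else ∅ := by
        ext z
        rw [hmemu]
        constructor
        · rintro ⟨hz1, hz2⟩
          rcases bcase hadj hz1 with ⟨h5, h6⟩ | ⟨h5, h6⟩
          · rw [h5] at hz2; omega
          · have hz2' : z.2 = (⟨r.val + 1, h1⟩ : Fin m) := by
              apply Fin.ext; simp; omega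
            have hzeq : z = (w, (⟨r.val + 1, h1⟩ : Fin m)) := by
              rw [← h5, ← hz2']
            rw [hzeq] at hz1
            rw [if_pos hz1]
            simp [hzeq]
        · intro hz
          split_ifs at hz with hB
          · rw [mem_singleton] at hz
            subst hz
            exact ⟨hB, by simp⟩
          · simp at hz
      rw [hNueq]
      split_ifs with hB
      · exact card_singleton _
      · exact card_empty
    · rw [vert_of_not w (by omega)]
      rw [Finset.card_eq_zero, Finset.filter_eq_empty_iff]
      intro z hz
      have := z.2.isLt
      omega
  omega

include hsymm hadj in
lemma row_eq (r : Fin m) :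
    ((Xs Δ).sum fun w => hdeg B w r) = ((Ys Δ).sum fun w => hdeg B w r) := by
  classical
  have key : ∀ (bb : Bool), ((univ.filter (fun w : TV Δ => cls w = bb)).sum fun w => hdeg B w r)
      = ((univ ×ˢ univ).filter
          (fun q : TV Δ × TV Δ => cls q.1 = bb ∧ B (q.1, r) (q.2, r))).card := by
    intro bb
    rw [Finset.card_eq_sum_card_fiberwise (f := Prod.fst) (t := univ) (fun x _ => mem_univ _)]
    rw [Finset.sum_filter]
    apply Finset.sum_congr rfl
    intro w _
    by_cases hb : cls w = bb
    · rw [if_pos hb, hdeg]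
      refine Finset.card_bij' (fun w' _ => (w, w')) (fun q _ => q.2) ?hi ?hj ?hleft ?hright
      case hi =>
        intro w' hw'
        rw [mem_filter] at hw'
        rw [mem_filter, mem_filter]
        exact ⟨⟨by simp, hb, hw'.2⟩, rfl⟩
      case hj =>
        intro q hq
        rw [mem_filter, mem_filter] at hq
        rw [mem_filter]
        refine ⟨mem_univ _, ?_⟩
        have : q = (w, q.2) := Prod.ext hq.2 rfl
        have h2 := hq.1.2.2
        rwa [hq.2] at h2
      case hleft =>
        intro w' hw'
        rfl
      case hright =>
        intro q hq
        rw [mem_filter, mem_filter] at hq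
        exact Prod.ext hq.2.symm rfl
    · rw [if_neg hb]
      symm
      rw [Finset.card_eq_zero, Finset.filter_eq_empty_iff]
      intro q hq hq2
      rw [mem_filter] at hq
      exact hb (hq2 ▸ hq.2.1)
  have hswap : ((univ ×ˢ univ).filter
        (fun q : TV Δ × TV Δ => cls q.1 = true ∧ B (q.1, r) (q.2, r))).card
      = ((univ ×ˢ univ).filter
        (fun q : TV Δ × TV Δ => cls q.1 = false ∧ B (q.1, r) (q.2, r))).card := by
    have hcls : ∀ (q : TV Δ × TV Δ), B (q.1, r) (q.2, r) → cls q.2 ≠ cls q.1 := by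
      intro q hB
      rcases bcase hadj hB with ⟨h5, h6⟩ | ⟨h5, h6⟩
      · exact (cls_ne h6).symm
      · rcases h6 with h6 | h6 <;> (simp at h6 <;> omega)
    refine Finset.card_bij' (fun q _ => (q.2, q.1)) (fun q _ => (q.2, q.1)) ?hi ?hj ?hleft ?hright
    case hi =>
      intro q hq
      rw [mem_filter] at hq ⊢
      obtain ⟨-, h1, h2⟩ := hq
      have h3 := hcls q h2
      rw [h1] at h3
      exact ⟨by simp, by simpa using h3, hsymm _ _ h2⟩
    case hj =>
      intro q hq
      rw [mem_filter] at hq ⊢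
      obtain ⟨-, h1, h2⟩ := hq
      have h3 := hcls q h2
      rw [h1] at h3
      exact ⟨by simp, by simpa using h3, hsymm _ _ h2⟩
    case hleft => intro q hq; rfl
    case hright => intro q hq; rfl
  rw [Xs, Ys, key true, key false, hswap]

lemma Dd_cast (j : ℕ) : Dd B j =
    ((((Ys Δ).sum fun w => vert B w j) : ℕ) : ℤ)
      - ((((Xs Δ).sum fun w => vert B w j) : ℕ) : ℤ) := by
  rw [Dd]
  push_cast
  rfl

include hsymm hadj hdeg2 in
lemma Dsum {j : ℕ} (hj : j < m) :
    Dd B j + Dd B (j + 1) = 2 * (((Ys Δ).card : ℤ) - ((Xs Δ).card : ℤ)) := by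
  classical
  set r : Fin m := ⟨j, hj⟩ with hr
  have hX : ((Xs Δ).sum fun w => hdeg B w r + vert B w j + vert B w (j + 1))
      = 2 * (Xs Δ).card := by
    rw [Finset.sum_congr rfl (fun w _ => degree_split hsymm hadj hdeg2 w r)]
    rw [Finset.sum_const, smul_eq_mul, Nat.mul_comm]
  have hY : ((Ys Δ).sum fun w => hdeg B w r + vert B w j + vert B w (j + 1))
      = 2 * (Ys Δ).card := by
    rw [Finset.sum_congr rfl (fun w _ => degree_split hsymm hadj hdeg2 w r)]
    rw [Finset.sum_const, smul_eq_mul, Nat.mul_comm]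
  rw [Finset.sum_add_distrib, Finset.sum_add_distrib] at hX hY
  have hrow := row_eq hsymm hadj (B := B) r
  rw [Dd_cast, Dd_cast]
  omega

lemma Dd_zero : Dd B 0 = 0 := by
  rw [Dd_cast]
  rw [Finset.sum_congr rfl (fun w _ => vert_of_not w (by omega)),
      Finset.sum_congr rfl (fun w _ => vert_of_not w (by omega))]
  simp

lemma Dd_last : Dd B m = 0 := by
  rw [Dd_cast]
  rw [Finset.sum_congr rfl (fun w _ => vert_of_not w (by omega)),
      Finset.sum_congr rfl (fun w _ => vert_of_not w (by omega))]
  simp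

include hsymm hadj hdeg2 in
lemma Dd_parity : ∀ j, j ≤ m →
    Dd B j = if j % 2 = 1 then 2 * (((Ys Δ).card : ℤ) - ((Xs Δ).card : ℤ)) else 0 := by
  intro j
  induction j with
  | zero => intro _; simpa using Dd_zero (B := B)
  | succ j ih =>
    intro hjm
    have hlt : j < m := by omega
    have hs := Dsum hsymm hadj hdeg2 hlt
    have hj := ih (by omega)
    by_cases hp : j % 2 = 1
    · rw [if_pos hp] at hj
      rw [if_neg (by omega)]
      omega
    · rw [if_neg hp] at hj
      rw [if_pos (by omega)]
      omega

include hsymm hadj hdeg2 in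
lemma m_even (hΔ : 3 ≤ Δ) (hm1 : 1 ≤ m) : m % 2 = 0 := by
  by_contra hodd
  have h1 := Dd_parity hsymm hadj hdeg2 m le_rfl
  rw [if_pos (by omega)] at h1
  rw [Dd_last] at h1
  have hX := card_Xs (Δ := Δ)
  have hY := card_Ys (Δ := Δ)
  omega

include hsymm hadj hdeg2 in
lemma forced (hΔ : 3 ≤ Δ) {j : ℕ} (hj : j % 2 = 1) (hjm : j ≤ m) :
    (∀ w ∈ Ys Δ, vert B w j = 1) ∧ (∀ w ∈ Xs Δ, vert B w j = 0) := by
  classical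
  have h1 := Dd_parity hsymm hadj hdeg2 j hjm
  rw [if_pos hj, Dd_cast] at h1
  have hX := card_Xs (Δ := Δ)
  have hY := card_Ys (Δ := Δ)
  have hYle : ((Ys Δ).sum fun w => vert B w j) ≤ (Ys Δ).card := by
    have := Finset.sum_le_card_nsmul (Ys Δ) (fun w => vert B w j) 1
      (fun w _ => vert_le_one w j)
    simpa using this
  have hXz : ((Xs Δ).sum fun w => vert B w j) = 0 := by omega
  have hYf : ((Ys Δ).sum fun w => vert B w j) = (Ys Δ).card := by omega
  constructor
  · intro w hw
    by_contra hne
    have hle := vert_le_one (B := B) w j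
    have h0 : vert B w j = 0 := by omega
    have hsum : vert B w j + (((Ys Δ).erase w).sum fun w' => vert B w' j)
        = ((Ys Δ).sum fun w' => vert B w' j) := by
      simpa using Finset.add_sum_erase (Ys Δ) (fun w => vert B w j) hw
    have hles : (((Ys Δ).erase w).sum fun w => vert B w j) ≤ ((Ys Δ).erase w).card := by
      have := Finset.sum_le_card_nsmul ((Ys Δ).erase w) (fun w => vert B w j) 1
        (fun w _ => vert_le_one w j)
      simpa using this
    have hcard : ((Ys Δ).erase w).card = (Ys Δ).card - 1 := Finset.card_erase_of_mem hw
    have hpos : 0 < (Ys Δ).card := Finset.card_pos.mpr ⟨w, hw⟩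
    omega
  · intro w hw
    have := (Finset.sum_eq_zero_iff.mp hXz) w hw
    exact this

lemma b_mem_Xs : (TV.b : TV Δ) ∈ Xs Δ := by simp only [Xs, mem_filter, mem_univ, true_and]; rfl
lemma a_mem_Ys : (TV.a : TV Δ) ∈ Ys Δ := by simp only [Ys, mem_filter, mem_univ, true_and]; rfl
lemma c_mem_Ys : (TV.c : TV Δ) ∈ Ys Δ := by simp only [Ys, mem_filter, mem_univ, true_and]; rfl

include hsymm hadj hdeg2 in
lemma hdegY_le (hΔ : 3 ≤ Δ) {w : TV Δ} (hw : w ∈ Ys Δ) (r : Fin m) :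
    hdeg B w r ≤ 1 := by
  have hds := degree_split hsymm hadj hdeg2 w r
  have hlt := r.isLt
  by_cases hp : r.val % 2 = 1
  · have h1 := (forced hsymm hadj hdeg2 hΔ hp (by omega)).1 w hw
    omega
  · have h1 := (forced hsymm hadj hdeg2 hΔ (by omega : (r.val + 1) % 2 = 1) (by omega)).1 w hw
    omega

include hsymm hadj hdeg2 in
lemma hdegX_ge (hΔ : 3 ≤ Δ) {w : TV Δ} (hw : w ∈ Xs Δ) (r : Fin m) :
    1 ≤ hdeg B w r := by
  have hds := degree_split hsymm hadj hdeg2 w r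
  have hlt := r.isLt
  have hv1 := vert_le_one (B := B) w r.val
  have hv2 := vert_le_one (B := B) w (r.val + 1)
  by_cases hp : r.val % 2 = 1
  · have h1 := (forced hsymm hadj hdeg2 hΔ hp (by omega)).2 w hw
    omega
  · have h1 := (forced hsymm hadj hdeg2 hΔ (by omega : (r.val + 1) % 2 = 1) (by omega)).2 w hw
    omega

include hsymm hadj hdeg2 in
lemma hdeg_b_ends (hΔ : 3 ≤ Δ) (hm0 : m % 2 = 0) (hm1 : 1 ≤ m) {r : Fin m}
    (hr : r.val = 0 ∨ r.val = m - 1) : hdeg B .b r = 2 := by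
  have hds := degree_split hsymm hadj hdeg2 .b r
  have hlt := r.isLt
  have hm2 : 2 ≤ m := by omega
  rcases hr with hr | hr
  · have h0 : vert B .b r.val = 0 := by rw [hr]; exact vert_of_not _ (by omega)
    have h1 : vert B .b (r.val + 1) = 0 := by
      rw [hr]
      exact (forced hsymm hadj hdeg2 hΔ (by omega) (by omega)).2 _ b_mem_Xs
    omega
  · have h1 : vert B .b (r.val + 1) = 0 := by
      rw [hr]; exact vert_of_not _ (by omega)
    have h0 : vert B .b r.val = 0 := by
      rw [hr]
      exact (forced hsymm hadj hdeg2 hΔ (by omega) (by omega)).2 _ b_mem_Xs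
    omega

lemma colsum (w : TV Δ) :
    ((univ : Finset (Fin m)).sum fun r => hdeg B w r)
      = ((univ : Finset (TV Δ)).sum fun w' => cross B w w') := by
  unfold hdeg cross
  simp_rw [Finset.card_filter]
  rw [Finset.sum_comm]

include hadj in
lemma cross_b_zero {w' : TV Δ} (hw' : w' ≠ .a ∧ w' ≠ .c) : cross B .b w' = 0 := by
  rw [cross, Finset.card_eq_zero, Finset.filter_eq_empty_iff]
  intro r _ hB
  rcases bcase hadj hB with ⟨h5, h6⟩ | ⟨h5, h6⟩
  · rcases adj_b h6 with h | h
    · exact hw'.1 h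
    · exact hw'.2 h
  · simp at h6

include hsymm hadj in
lemma branch_two (hcut : ∀ S : Set (TV Δ × Fin m), ∀ x ∈ S, ∀ y ∉ S,
      ∃ z₁ w₁ z₂ w₂, B z₁ w₁ ∧ B z₂ w₂ ∧ z₁ ∈ S ∧ w₁ ∉ S ∧ z₂ ∈ S ∧ w₂ ∉ S ∧
        s(z₁, w₁) ≠ s(z₂, w₂))
    (hm1 : 1 ≤ m) (i : Fin (Δ - 1)) : 2 ≤ cross B .a (.A i) := by
  classical
  set S : Set (TV Δ × Fin m) :=
    {z | z.1 = .A i ∨ z.1 = .u i ∨ z.1 = .v i} with hS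
  have hxS : ((.A i, (⟨0, by omega⟩ : Fin m)) : TV Δ × Fin m) ∈ S := Or.inl rfl
  have hyS : ((.b, (⟨0, by omega⟩ : Fin m)) : TV Δ × Fin m) ∉ S := by
    rw [hS]; simp
  obtain ⟨z₁, w₁, z₂, w₂, hB1, hB2, hz1, hw1, hz2, hw2, hnee⟩ := hcut S _ hxS _ hyS
  have hchar : ∀ z w', B z w' → z ∈ S → w' ∉ S →
      z = (.A i, z.2) ∧ w' = ((.a : TV Δ), z.2) := by
    intro z w' hB hzS hwS
    have h := hadj _ _ hB
    rw [SimpleGraph.boxProd_adj] at h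
    rcases h with ⟨h1, h2⟩ | ⟨h1, h2⟩
    · have hzS' : z.1 = .A i ∨ z.1 = .u i ∨ z.1 = .v i := hzS
      have hwS' : ¬(w'.1 = .A i ∨ w'.1 = .u i ∨ w'.1 = .v i) := hwS
      obtain ⟨ha1, ha2⟩ := adj_branch h1 hzS' hwS'
      exact ⟨Prod.ext ha1 rfl, Prod.ext ha2 h2.symm⟩
    · exfalso
      apply hwS
      have hzS' : z.1 = .A i ∨ z.1 = .u i ∨ z.1 = .v i := hzS
      show w'.1 = .A i ∨ w'.1 = .u i ∨ w'.1 = .v i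
      rwa [← h2]
  obtain ⟨hc1, hc1'⟩ := hchar z₁ w₁ hB1 hz1 hw1
  obtain ⟨hc2, hc2'⟩ := hchar z₂ w₂ hB2 hz2 hw2
  have hr12 : z₁.2 ≠ z₂.2 := by
    intro h
    apply hnee
    rw [hc1, hc1', hc2, hc2', h]
  have hsub : ({z₁.2, z₂.2} : Finset (Fin m)) ⊆
      (univ : Finset (Fin m)).filter (fun r => B (.a, r) (.A i, r)) := by
    intro r hr
    rw [Finset.mem_insert, Finset.mem_singleton] at hr
    rw [mem_filter]
    refine ⟨mem_univ _, ?_⟩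
    rcases hr with rfl | rfl
    · apply hsymm
      rw [hc1, hc1'] at hB1
      exact hB1
    · apply hsymm
      rw [hc2, hc2'] at hB2
      exact hB2
  calc 2 = ({z₁.2, z₂.2} : Finset (Fin m)).card := (Finset.card_pair hr12).symm
    _ ≤ _ := Finset.card_le_card hsub
  
include hsymm hadj in
lemma branch_twoC (hcut : ∀ S : Set (TV Δ × Fin m), ∀ x ∈ S, ∀ y ∉ S,
      ∃ z₁ w₁ z₂ w₂, B z₁ w₁ ∧ B z₂ w₂ ∧ z₁ ∈ S ∧ w₁ ∉ S ∧ z₂ ∈ S ∧ w₂ ∉ S ∧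
        s(z₁, w₁) ≠ s(z₂, w₂))
    (hm1 : 1 ≤ m) (i : Fin (Δ - 1)) : 2 ≤ cross B .c (.C i) := by
  classical
  set S : Set (TV Δ × Fin m) :=
    {z | z.1 = .C i ∨ z.1 = .y i ∨ z.1 = .z i} with hS
  have hxS : ((.C i, (⟨0, by omega⟩ : Fin m)) : TV Δ × Fin m) ∈ S := Or.inl rfl
  have hyS : ((.b, (⟨0, by omega⟩ : Fin m)) : TV Δ × Fin m) ∉ S := by
    rw [hS]; simp
  obtain ⟨z₁, w₁, z₂, w₂, hB1, hB2, hz1, hw1, hz2, hw2, hnee⟩ := hcut S _ hxS _ hyS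
  have hchar : ∀ z w', B z w' → z ∈ S → w' ∉ S →
      z = (.C i, z.2) ∧ w' = ((.c : TV Δ), z.2) := by
    intro z w' hB hzS hwS
    have h := hadj _ _ hB
    rw [SimpleGraph.boxProd_adj] at h
    rcases h with ⟨h1, h2⟩ | ⟨h1, h2⟩
    · have hzS' : z.1 = .C i ∨ z.1 = .y i ∨ z.1 = .z i := hzS
      have hwS' : ¬(w'.1 = .C i ∨ w'.1 = .y i ∨ w'.1 = .z i) := hwS
      obtain ⟨ha1, ha2⟩ := adj_branchC h1 hzS' hwS'
      exact ⟨Prod.ext ha1 rfl, Prod.ext ha2 h2.symm⟩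
    · exfalso
      apply hwS
      have hzS' : z.1 = .C i ∨ z.1 = .y i ∨ z.1 = .z i := hzS
      show w'.1 = .C i ∨ w'.1 = .y i ∨ w'.1 = .z i
      rwa [← h2]
  obtain ⟨hc1, hc1'⟩ := hchar z₁ w₁ hB1 hz1 hw1
  obtain ⟨hc2, hc2'⟩ := hchar z₂ w₂ hB2 hz2 hw2
  have hr12 : z₁.2 ≠ z₂.2 := by
    intro h
    apply hnee
    rw [hc1, hc1', hc2, hc2', h]
  have hsub : ({z₁.2, z₂.2} : Finset (Fin m)) ⊆
      (univ : Finset (Fin m)).filter (fun r => B (.c, r) (.C i, r)) := by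
    intro r hr
    rw [Finset.mem_insert, Finset.mem_singleton] at hr
    rw [mem_filter]
    refine ⟨mem_univ _, ?_⟩
    rcases hr with rfl | rfl
    · apply hsymm
      rw [hc1, hc1'] at hB1
      exact hB1
    · apply hsymm
      rw [hc2, hc2'] at hB2
      exact hB2
  calc 2 = ({z₁.2, z₂.2} : Finset (Fin m)).card := (Finset.card_pair hr12).symm
    _ ≤ _ := Finset.card_le_card hsub

include hsymm hadj hdeg2 in
theorem core (hΔ : 3 ≤ Δ) (hm1 : 1 ≤ m) (hm : m ≤ 4 * Δ - 3)
    (hcut : ∀ S : Set (TV Δ × Fin m), ∀ x ∈ S, ∀ y ∉ S,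
      ∃ z₁ w₁ z₂ w₂, B z₁ w₁ ∧ B z₂ w₂ ∧ z₁ ∈ S ∧ w₁ ∉ S ∧ z₂ ∈ S ∧ w₂ ∉ S ∧
        s(z₁, w₁) ≠ s(z₂, w₂)) : False := by
  classical
  have hm0 := m_even hsymm hadj hdeg2 hΔ hm1
  have hm2 : 2 ≤ m := by omega
  -- a column
  have hsa : ((univ : Finset (Fin m)).sum fun r => hdeg B .a r) ≤ m := by
    have h1 := Finset.sum_le_card_nsmul (univ : Finset (Fin m)) (fun r => hdeg B .a r) 1
      (fun r _ => hdegY_le hsymm hadj hdeg2 hΔ a_mem_Ys r)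
    simpa using h1
  have hsc : ((univ : Finset (Fin m)).sum fun r => hdeg B .c r) ≤ m := by
    have h1 := Finset.sum_le_card_nsmul (univ : Finset (Fin m)) (fun r => hdeg B .c r) 1
      (fun r _ => hdegY_le hsymm hadj hdeg2 hΔ c_mem_Ys r)
    simpa using h1
  -- b column
  have hsb : m + 2 ≤ ((univ : Finset (Fin m)).sum fun r => hdeg B .b r) := by
    set r0 : Fin m := ⟨0, by omega⟩ with hr0
    set rl : Fin m := ⟨m - 1, by omega⟩ with hrl
    have hner : r0 ≠ rl := by
      intro h
      have := congrArg Fin.val h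
      rw [hr0, hrl] at this
      simp at this
      omega
    have hpt : ∀ r : Fin m,
        ((if r = r0 then 1 else 0) + (if r = rl then 1 else 0) + 1 : ℕ) ≤ hdeg B .b r := by
      intro r
      by_cases h0 : r = r0
      · rw [if_pos h0, if_neg (by rw [h0]; exact hner)]
        have := hdeg_b_ends hsymm hadj hdeg2 hΔ hm0 hm1 (r := r) (Or.inl (by rw [h0, hr0]))
        omega
      · by_cases hl : r = rl
        · rw [if_neg h0, if_pos hl]
          have := hdeg_b_ends hsymm hadj hdeg2 hΔ hm0 hm1 (r := r) (Or.inr (by rw [hl, hrl]))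
          omega
        · rw [if_neg h0, if_neg hl]
          have := hdegX_ge hsymm hadj hdeg2 hΔ b_mem_Xs r
          omega
    have hsum := Finset.sum_le_sum (fun r (_ : r ∈ (univ : Finset (Fin m))) => hpt r)
    have heval : ((univ : Finset (Fin m)).sum fun r =>
        ((if r = r0 then 1 else 0) + (if r = rl then 1 else 0) + 1 : ℕ)) = m + 2 := by
      rw [Finset.sum_add_distrib, Finset.sum_add_distrib]
      rw [Finset.sum_ite_eq' univ r0 (fun _ => (1 : ℕ))]
      rw [Finset.sum_ite_eq' univ rl (fun _ => (1 : ℕ))]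
      simp
      omega
    omega
  -- decompositions
  have hda : cross B .a .b + ((univ : Finset (Fin (Δ - 1))).sum fun i => cross B .a (.A i))
      ≤ ((univ : Finset (TV Δ)).sum fun w' => cross B .a w') := by
    have hsub : insert TV.b ((univ : Finset (Fin (Δ - 1))).image TV.A) ⊆
        (univ : Finset (TV Δ)) := Finset.subset_univ _
    have h1 := Finset.sum_le_sum_of_subset (f := fun w' => cross B .a w') hsub
    rw [Finset.sum_insert (by simp), Finset.sum_image (fun i _ j _ h => A_inj h)] at h1
    exact h1
  have hdc : cross B .c .b + ((univ : Finset (Fin (Δ - 1))).sum fun i => cross B .c (.C i))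
      ≤ ((univ : Finset (TV Δ)).sum fun w' => cross B .c w') := by
    have hsub : insert TV.b ((univ : Finset (Fin (Δ - 1))).image TV.C) ⊆
        (univ : Finset (TV Δ)) := Finset.subset_univ _
    have h1 := Finset.sum_le_sum_of_subset (f := fun w' => cross B .c w') hsub
    rw [Finset.sum_insert (by simp), Finset.sum_image (fun i _ j _ h => C_inj h)] at h1
    exact h1
  have hdb : ((univ : Finset (TV Δ)).sum fun w' => cross B .b w')
      = cross B .b .a + cross B .b .c := by
    rw [← Finset.sum_subset (Finset.subset_univ ({TV.a, TV.c} : Finset (TV Δ)))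
      (fun w' _ hw' => by
        rw [Finset.mem_insert, Finset.mem_singleton] at hw'
        push_neg at hw'
        exact cross_b_zero hadj hw')]
    rw [Finset.sum_pair (by simp)]
  -- branch bounds
  have hba : 2 * (Δ - 1) ≤ ((univ : Finset (Fin (Δ - 1))).sum fun i => cross B .a (.A i)) := by
    have h1 := Finset.card_nsmul_le_sum (univ : Finset (Fin (Δ - 1)))
      (fun i => cross B .a (.A i)) 2 (fun i _ => branch_two hsymm hadj hcut hm1 i)
    simpa [Finset.card_univ, mul_comm] using h1
  have hbc : 2 * (Δ - 1) ≤ ((univ : Finset (Fin (Δ - 1))).sum fun i => cross B .c (.C i)) := by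
    have h1 := Finset.card_nsmul_le_sum (univ : Finset (Fin (Δ - 1)))
      (fun i => cross B .c (.C i)) 2 (fun i _ => branch_twoC hsymm hadj hcut hm1 i)
    simpa [Finset.card_univ, mul_comm] using h1
  -- assemble
  have hca := colsum (B := B) TV.a
  have hcb := colsum (B := B) TV.b
  have hcc := colsum (B := B) TV.c
  have hsym1 : cross B .a .b = cross B .b .a := cross_symm hsymm _ _
  have hsym2 : cross B .c .b = cross B .b .c := cross_symm hsymm _ _
  omega

end Core

end Stmt10Aux

/-- For every `Δ ≥ 3` and every `m ≤ 4Δ − 3`, the product `T_Δ □ Pₘ` is not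
hamiltonian. -/
theorem stmt10 (Δ : ℕ) (hΔ : 3 ≤ Δ) (m : ℕ) (hm1 : 1 ≤ m) (hm : m ≤ 4 * Δ - 3) :
    ¬ (Tgraph Δ □ pathGraph m).IsHamiltonian := by
  classical
  intro hham
  have hnt : Nontrivial (TV Δ × Fin m) :=
    ⟨(TV.a, ⟨0, by omega⟩), (TV.b, ⟨0, by omega⟩), by simp⟩
  have hcard : Fintype.card (TV Δ × Fin m) ≠ 1 := by
    have := Fintype.one_lt_card_iff_nontrivial.mpr hnt
    omega
  obtain ⟨v0, p, hp⟩ := hham hcard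
  set B : TV Δ × Fin m → TV Δ × Fin m → Prop :=
    fun z w => s(z, w) ∈ p.edges with hB
  have hsymm : ∀ z w, B z w → B w z := by
    intro z w h
    have h' : s(z, w) ∈ p.edges := h
    show s(w, z) ∈ p.edges
    rwa [Sym2.eq_swap]
  have hadj : ∀ z w, B z w → (Tgraph Δ □ pathGraph m).Adj z w := by
    intro z w h
    exact (SimpleGraph.mem_edgeSet _).mp (p.edges_subset_edgeSet h)
  have hdeg2 : ∀ x, ∃ u₁ u₂, u₁ ≠ u₂ ∧ ∀ w, B x w ↔ w = u₁ ∨ w = u₂ := by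
    intro x
    obtain ⟨u₁, u₂, hne, hiff⟩ := Stmt10Aux.two_nbrs hp x
    exact ⟨u₁, u₂, hne, hiff⟩
  have hcut : ∀ S : Set (TV Δ × Fin m), ∀ x ∈ S, ∀ y ∉ S,
      ∃ z₁ w₁ z₂ w₂, B z₁ w₁ ∧ B z₂ w₂ ∧ z₁ ∈ S ∧ w₁ ∉ S ∧ z₂ ∈ S ∧ w₂ ∉ S ∧
        s(z₁, w₁) ≠ s(z₂, w₂) := by
    intro S x hx y hy
    exact Stmt10Aux.two_cross hp S hx hy
  exact Stmt10Aux.core hsymm hadj hdeg2 hΔ hm1 hm hcut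
end

section
/- Let C be a hamiltonian cycle in H = T_Δ □ Pₘ, where T_Δ is the tree described above. Then C contains the path (a,2),(a,1),(b,1),(c,1),(c,2). -/
open SimpleGraph

variable {V : Type*} {G : SimpleGraph V}

lemma path_end_nbr {u v : V} (p : G.Walk u v) (hp : p.IsPath) (hnn : ¬ p.Nil) (x : V) :
    p.toSubgraph.Adj v x ↔ x = p.getVert (p.length - 1) := by
  induction p with
  | nil => simp at hnn
  | @cons u u' v h q ih =>
    cases q with
    | nil =>
      simp only [Walk.toSubgraph, Subgraph.sup_adj, subgraphOfAdj_adj, singletonSubgraph_adj]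
      constructor
      · rintro (h' | h')
        · simp only [Sym2.eq, Sym2.rel_iff', Prod.mk.injEq, Prod.swap_prod_mk] at h'
          rcases h' with ⟨h1, h2⟩ | ⟨h1, h2⟩
          · exact absurd h1 h.ne
          · simpa using h1.symm
        · simp at h'
      · rintro rfl
        simp
    | cons h' q' =>
      rename_i w
      have hq : (Walk.cons h' q').IsPath := hp.of_cons
      have hvq : v ∈ (Walk.cons h' q').support := Walk.end_mem_support _
      have hun : u ∉ (Walk.cons h' q').support := by
        have := hp.support_nodup
        simp only [Walk.support_cons, List.nodup_cons] at this
        simpa using this.1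
      have hvu : v ≠ u := fun h'' => hun (h'' ▸ hvq)
      have hvu' : v ≠ u' := by
        rintro rfl
        have := hq.support_nodup
        simp only [Walk.support_cons, List.nodup_cons] at this
        exact this.1 (Walk.end_mem_support q')
      rw [show (Walk.cons h (Walk.cons h' q')).toSubgraph
          = G.subgraphOfAdj h ⊔ (Walk.cons h' q').toSubgraph from rfl]
      simp only [Subgraph.sup_adj, subgraphOfAdj_adj]
      rw [ih hq (Walk.not_nil_cons)]
      have hlen : (Walk.cons h (Walk.cons h' q')).length - 1
          = (Walk.cons h' q').length := by simp
      have h0 : (Walk.cons h' q').length ≠ 0 := by simp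
      rw [hlen, Walk.getVert_cons _ _ h0]
      constructor
      · rintro (h'' | h'')
        · simp only [Sym2.eq, Sym2.rel_iff', Prod.mk.injEq, Prod.swap_prod_mk] at h''
          rcases h'' with ⟨h1, h2⟩ | ⟨h1, h2⟩
          · exact absurd h1.symm hvu
          · exact absurd h2.symm hvu'
        · exact h''
      · intro h''
        right
        exact h''

lemma cycle_nbrs_start {v : V} {c : G.Walk v v} (hc : c.IsCycle) :
    ∃ w1 w2, w1 ≠ w2 ∧ ∀ x, (c.toSubgraph.Adj v x ↔ x = w1 ∨ x = w2) := by
  have hlen := hc.three_le_length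
  cases c with
  | nil => simp at hlen
  | @cons _ w _ h p =>
    rw [Walk.cons_isCycle_iff] at hc
    obtain ⟨hp, he⟩ := hc
    have hnn : ¬ p.Nil := by
      rw [Walk.nil_iff_length_eq]
      simp only [Walk.length_cons] at hlen
      omega
    refine ⟨w, p.getVert (p.length - 1), ?_, ?_⟩
    · intro hw
      apply he
      have : p.toSubgraph.Adj v w :=
        (path_end_nbr p hp hnn _).mpr hw
      rw [← Walk.mem_edges_toSubgraph, Subgraph.mem_edgeSet]
      exact this
    · intro x
      rw [show (Walk.cons h p).toSubgraph = G.subgraphOfAdj h ⊔ p.toSubgraph from rfl]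
      simp only [Subgraph.sup_adj, subgraphOfAdj_adj]
      rw [path_end_nbr p hp hnn x]
      constructor
      · rintro (h' | h')
        · simp only [Sym2.eq, Sym2.rel_iff', Prod.mk.injEq, Prod.swap_prod_mk] at h'
          rcases h' with ⟨h1, h2⟩ | ⟨h1, h2⟩ <;> aesop
        · exact Or.inr h'
      · rintro (rfl | h')
        · left; rfl
        · exact Or.inr h'

lemma cycle_nbrs [DecidableEq V] {v : V} {c : G.Walk v v} (hc : c.IsCycle) {u : V}
    (hu : u ∈ c.support) :
    ∃ w1 w2, w1 ≠ w2 ∧ ∀ x, (c.toSubgraph.Adj u x ↔ x = w1 ∨ x = w2) := by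
  have := cycle_nbrs_start (hc.rotate hu)
  rwa [Walk.toSubgraph_rotate] at this

section TVlemmas
variable {Δ : ℕ}

lemma T_adj_u {i : Fin (Δ-1)} {x : TV Δ} (h : (Tgraph Δ).Adj (.u i) x) : x = .A i := by
  rcases h with ⟨hne, h | h⟩ <;>
    rcases h with ⟨h1, h2⟩ | ⟨h1, h2⟩ | ⟨j, (⟨h1,h2⟩|⟨h1,h2⟩|⟨h1,h2⟩|⟨h1,h2⟩|⟨h1,h2⟩|⟨h1,h2⟩)⟩ <;>
    simp_all

lemma T_adj_v {i : Fin (Δ-1)} {x : TV Δ} (h : (Tgraph Δ).Adj (.v i) x) : x = .A i := by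
  rcases h with ⟨hne, h | h⟩ <;>
    rcases h with ⟨h1, h2⟩ | ⟨h1, h2⟩ | ⟨j, (⟨h1,h2⟩|⟨h1,h2⟩|⟨h1,h2⟩|⟨h1,h2⟩|⟨h1,h2⟩|⟨h1,h2⟩)⟩ <;>
    simp_all

lemma T_adj_y {i : Fin (Δ-1)} {x : TV Δ} (h : (Tgraph Δ).Adj (.y i) x) : x = .C i := by
  rcases h with ⟨hne, h | h⟩ <;>
    rcases h with ⟨h1, h2⟩ | ⟨h1, h2⟩ | ⟨j, (⟨h1,h2⟩|⟨h1,h2⟩|⟨h1,h2⟩|⟨h1,h2⟩|⟨h1,h2⟩|⟨h1,h2⟩)⟩ <;>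
    simp_all

lemma T_adj_z {i : Fin (Δ-1)} {x : TV Δ} (h : (Tgraph Δ).Adj (.z i) x) : x = .C i := by
  rcases h with ⟨hne, h | h⟩ <;>
    rcases h with ⟨h1, h2⟩ | ⟨h1, h2⟩ | ⟨j, (⟨h1,h2⟩|⟨h1,h2⟩|⟨h1,h2⟩|⟨h1,h2⟩|⟨h1,h2⟩|⟨h1,h2⟩)⟩ <;>
    simp_all

lemma T_adj_A {i : Fin (Δ-1)} {x : TV Δ} (h : (Tgraph Δ).Adj (.A i) x) :
    x = .a ∨ x = .u i ∨ x = .v i := by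
  rcases h with ⟨hne, h | h⟩ <;>
    rcases h with ⟨h1, h2⟩ | ⟨h1, h2⟩ | ⟨j, (⟨h1,h2⟩|⟨h1,h2⟩|⟨h1,h2⟩|⟨h1,h2⟩|⟨h1,h2⟩|⟨h1,h2⟩)⟩ <;>
    simp_all

lemma T_adj_C {i : Fin (Δ-1)} {x : TV Δ} (h : (Tgraph Δ).Adj (.C i) x) :
    x = .c ∨ x = .y i ∨ x = .z i := by
  rcases h with ⟨hne, h | h⟩ <;>
    rcases h with ⟨h1, h2⟩ | ⟨h1, h2⟩ | ⟨j, (⟨h1,h2⟩|⟨h1,h2⟩|⟨h1,h2⟩|⟨h1,h2⟩|⟨h1,h2⟩|⟨h1,h2⟩)⟩ <;>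
    simp_all

lemma T_adj_a {x : TV Δ} (h : (Tgraph Δ).Adj .a x) : x = .b ∨ ∃ j, x = .A j := by
  rcases h with ⟨hne, h | h⟩ <;>
    rcases h with ⟨h1, h2⟩ | ⟨h1, h2⟩ | ⟨j, (⟨h1,h2⟩|⟨h1,h2⟩|⟨h1,h2⟩|⟨h1,h2⟩|⟨h1,h2⟩|⟨h1,h2⟩)⟩ <;>
    simp_all

lemma T_adj_c {x : TV Δ} (h : (Tgraph Δ).Adj .c x) : x = .b ∨ ∃ j, x = .C j := by
  rcases h with ⟨hne, h | h⟩ <;>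
    rcases h with ⟨h1, h2⟩ | ⟨h1, h2⟩ | ⟨j, (⟨h1,h2⟩|⟨h1,h2⟩|⟨h1,h2⟩|⟨h1,h2⟩|⟨h1,h2⟩|⟨h1,h2⟩)⟩ <;>
    simp_all

end TVlemmas

lemma force2 {V : Type*} [DecidableEq V] {G : SimpleGraph V} {v : V} {c : G.Walk v v}
    (hc : c.IsHamiltonianCycle) (p0 n1 n2 : V)
    (hn : ∀ x, G.Adj p0 x → x = n1 ∨ x = n2) :
    c.toSubgraph.Adj p0 n1 ∧ c.toSubgraph.Adj p0 n2 := by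
  obtain ⟨w1, w2, hne, hiff⟩ := cycle_nbrs hc.isCycle (hc.mem_support p0)
  have a1 := hn w1 (c.toSubgraph.adj_sub ((hiff w1).mpr (Or.inl rfl)))
  have a2 := hn w2 (c.toSubgraph.adj_sub ((hiff w2).mpr (Or.inr rfl)))
  constructor <;> rcases a1 with rfl | rfl <;> rcases a2 with rfl | rfl <;>
    first
      | exact (hiff _).mpr (Or.inl rfl)
      | exact (hiff _).mpr (Or.inr rfl)
      | exact absurd rfl hne

lemma no_third {V : Type*} [DecidableEq V] {G : SimpleGraph V} {v : V} {c : G.Walk v v}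
    (hc : c.IsHamiltonianCycle) (p0 n1 n2 : V) (hne : n1 ≠ n2)
    (h1 : c.toSubgraph.Adj p0 n1) (h2 : c.toSubgraph.Adj p0 n2)
    {x : V} (hx1 : x ≠ n1) (hx2 : x ≠ n2) : ¬ c.toSubgraph.Adj p0 x := by
  obtain ⟨w1, w2, hw, hiff⟩ := cycle_nbrs hc.isCycle (hc.mem_support p0)
  intro hx
  rcases (hiff n1).mp h1 with rfl | rfl <;> rcases (hiff n2).mp h2 with rfl | rfl <;>
    rcases (hiff x).mp hx with rfl | rfl <;> simp_all


/-- Any hamiltonian cycle of `T_Δ □ Pₘ` contains the path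
`(a,2),(a,1),(b,1),(c,1),(c,2)` (columns `1, 2` are `0`-indexed as `0, 1`);
containing a path means containing each of its edges. -/
theorem stmt12 (Δ : ℕ) (hΔ : 3 ≤ Δ) (m : ℕ) (hm : 2 ≤ m)
    (x : TV Δ × Fin m) (c : (Tgraph Δ □ pathGraph m).Walk x x)
    (hc : c.IsHamiltonianCycle) :
    s((TV.a, (⟨1, by omega⟩ : Fin m)), (TV.a, (⟨0, by omega⟩ : Fin m))) ∈ c.edges ∧
    s((TV.a, (⟨0, by omega⟩ : Fin m)), (TV.b, (⟨0, by omega⟩ : Fin m))) ∈ c.edges ∧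
    s((TV.b, (⟨0, by omega⟩ : Fin m)), (TV.c, (⟨0, by omega⟩ : Fin m))) ∈ c.edges ∧
    s((TV.c, (⟨0, by omega⟩ : Fin m)), (TV.c, (⟨1, by omega⟩ : Fin m))) ∈ c.edges := by
  set col0 : Fin m := ⟨0, by omega⟩ with hcol0
  set col1 : Fin m := ⟨1, by omega⟩ with hcol1
  have hcoladj : ∀ j : Fin m, (pathGraph m).Adj col0 j → j = col1 := by
    intro j h
    rw [pathGraph_adj] at h
    apply Fin.ext
    simp only [hcol0, hcol1] at h ⊢
    omega
  -- Step 1: the leaves force the edges at (A i, col0) and (C i, col0).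
  have hstepA : ∀ i : Fin (Δ - 1), ¬ c.toSubgraph.Adj (TV.a, col0) (TV.A i, col0) := by
    intro i
    have hu : c.toSubgraph.Adj (TV.A i, col0) (TV.u i, col0) := by
      refine ((force2 hc (TV.u i, col0) (TV.A i, col0) (TV.u i, col1) ?_).1).symm
      rintro ⟨x1, x2⟩ hadj
      rcases boxProd_adj.mp hadj with ⟨ht, hcl⟩ | ⟨hp, hf⟩
      · obtain rfl : col0 = x2 := hcl
        exact Or.inl (Prod.ext_iff.mpr ⟨T_adj_u ht, rfl⟩)
      · obtain rfl : TV.u i = x1 := hf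
        exact Or.inr (Prod.ext_iff.mpr ⟨rfl, hcoladj _ hp⟩)
    have hv : c.toSubgraph.Adj (TV.A i, col0) (TV.v i, col0) := by
      refine ((force2 hc (TV.v i, col0) (TV.A i, col0) (TV.v i, col1) ?_).1).symm
      rintro ⟨x1, x2⟩ hadj
      rcases boxProd_adj.mp hadj with ⟨ht, hcl⟩ | ⟨hp, hf⟩
      · obtain rfl : col0 = x2 := hcl
        exact Or.inl (Prod.ext_iff.mpr ⟨T_adj_v ht, rfl⟩)
      · obtain rfl : TV.v i = x1 := hf
        exact Or.inr (Prod.ext_iff.mpr ⟨rfl, hcoladj _ hp⟩)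
    intro hcontra
    exact no_third hc (TV.A i, col0) (TV.u i, col0) (TV.v i, col0)
      (by simp) hu hv (by simp) (by simp) hcontra.symm
  have hstepC : ∀ i : Fin (Δ - 1), ¬ c.toSubgraph.Adj (TV.c, col0) (TV.C i, col0) := by
    intro i
    have hy : c.toSubgraph.Adj (TV.C i, col0) (TV.y i, col0) := by
      refine ((force2 hc (TV.y i, col0) (TV.C i, col0) (TV.y i, col1) ?_).1).symm
      rintro ⟨x1, x2⟩ hadj
      rcases boxProd_adj.mp hadj with ⟨ht, hcl⟩ | ⟨hp, hf⟩
      · obtain rfl : col0 = x2 := hcl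
        exact Or.inl (Prod.ext_iff.mpr ⟨T_adj_y ht, rfl⟩)
      · obtain rfl : TV.y i = x1 := hf
        exact Or.inr (Prod.ext_iff.mpr ⟨rfl, hcoladj _ hp⟩)
    have hz : c.toSubgraph.Adj (TV.C i, col0) (TV.z i, col0) := by
      refine ((force2 hc (TV.z i, col0) (TV.C i, col0) (TV.z i, col1) ?_).1).symm
      rintro ⟨x1, x2⟩ hadj
      rcases boxProd_adj.mp hadj with ⟨ht, hcl⟩ | ⟨hp, hf⟩
      · obtain rfl : col0 = x2 := hcl
        exact Or.inl (Prod.ext_iff.mpr ⟨T_adj_z ht, rfl⟩)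
      · obtain rfl : TV.z i = x1 := hf
        exact Or.inr (Prod.ext_iff.mpr ⟨rfl, hcoladj _ hp⟩)
    intro hcontra
    exact no_third hc (TV.C i, col0) (TV.y i, col0) (TV.z i, col0)
      (by simp) hy hz (by simp) (by simp) hcontra.symm
  -- Step 2: deduce the two edges at (a, col0) and (c, col0).
  have hA : c.toSubgraph.Adj (TV.a, col0) (TV.b, col0) ∧
      c.toSubgraph.Adj (TV.a, col0) (TV.a, col1) := by
    obtain ⟨w1, w2, hne, hiff⟩ := cycle_nbrs hc.isCycle (hc.mem_support (TV.a, col0))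
    have hclass : ∀ w, c.toSubgraph.Adj (TV.a, col0) w →
        w = (TV.b, col0) ∨ w = (TV.a, col1) := by
      rintro ⟨x1, x2⟩ hadj
      rcases boxProd_adj.mp (c.toSubgraph.adj_sub hadj) with ⟨ht, hcl⟩ | ⟨hp, hf⟩
      · obtain rfl : col0 = x2 := hcl
        rcases T_adj_a ht with rfl | ⟨j, rfl⟩
        · exact Or.inl rfl
        · exact absurd hadj (hstepA j)
      · obtain rfl : TV.a = x1 := hf
        exact Or.inr (Prod.ext_iff.mpr ⟨rfl, hcoladj _ hp⟩)
    have a1 := hclass w1 ((hiff w1).mpr (Or.inl rfl))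
    have a2 := hclass w2 ((hiff w2).mpr (Or.inr rfl))
    constructor <;> rcases a1 with rfl | rfl <;> rcases a2 with rfl | rfl <;>
      first
        | exact (hiff _).mpr (Or.inl rfl)
        | exact (hiff _).mpr (Or.inr rfl)
        | exact absurd rfl hne
  have hC : c.toSubgraph.Adj (TV.c, col0) (TV.b, col0) ∧
      c.toSubgraph.Adj (TV.c, col0) (TV.c, col1) := by
    obtain ⟨w1, w2, hne, hiff⟩ := cycle_nbrs hc.isCycle (hc.mem_support (TV.c, col0))
    have hclass : ∀ w, c.toSubgraph.Adj (TV.c, col0) w →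
        w = (TV.b, col0) ∨ w = (TV.c, col1) := by
      rintro ⟨x1, x2⟩ hadj
      rcases boxProd_adj.mp (c.toSubgraph.adj_sub hadj) with ⟨ht, hcl⟩ | ⟨hp, hf⟩
      · obtain rfl : col0 = x2 := hcl
        rcases T_adj_c ht with rfl | ⟨j, rfl⟩
        · exact Or.inl rfl
        · exact absurd hadj (hstepC j)
      · obtain rfl : TV.c = x1 := hf
        exact Or.inr (Prod.ext_iff.mpr ⟨rfl, hcoladj _ hp⟩)
    have a1 := hclass w1 ((hiff w1).mpr (Or.inl rfl))
    have a2 := hclass w2 ((hiff w2).mpr (Or.inr rfl))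
    constructor <;> rcases a1 with rfl | rfl <;> rcases a2 with rfl | rfl <;>
      first
        | exact (hiff _).mpr (Or.inl rfl)
        | exact (hiff _).mpr (Or.inr rfl)
        | exact absurd rfl hne
  refine ⟨?_, ?_, ?_, ?_⟩
  · rw [← Walk.mem_edges_toSubgraph, Subgraph.mem_edgeSet]
    exact hA.2.symm
  · rw [← Walk.mem_edges_toSubgraph, Subgraph.mem_edgeSet]
    exact hA.1
  · rw [← Walk.mem_edges_toSubgraph, Subgraph.mem_edgeSet]
    exact hC.1.symm
  · rw [← Walk.mem_edges_toSubgraph, Subgraph.mem_edgeSet]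
    exact hC.2
end

section
/- Let B be the subtree of T_Δ induced by {a, b, c}, and suppose C is a hamiltonian cycle of H = T_Δ □ Pₘ with m ≤ 4Δ − 3 that uses at most m − 2 edges with exactly one endvertex in V(B) × {1,...,m}. Since H − (V(B) × {1,...,m}) has exactly 2Δ − 2 connected components but a cycle accessing a component must use at least 2 such crossing edges per component it meets, C can visit at most (m−2)/2 < 2Δ − 2 of these components, so C is not spanning — a contradiction. -/
open SimpleGraph

/-! ### Auxiliary machinery -/

/-- Crossing predicate for a cut given by `K : V → Bool`. -/
def crossB {V : Type*} (K : V → Bool) : Sym2 V → Bool :=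
  Sym2.lift ⟨fun p q => xor (K p) (K q), by intro a b; simp [Bool.xor_comm]⟩

@[simp] lemma crossB_mk {V : Type*} (K : V → Bool) (p q : V) :
    crossB K s(p, q) = xor (K p) (K q) := rfl

lemma crossB_parity {V : Type*} {G : SimpleGraph V} {x y : V} (K : V → Bool)
    (w : G.Walk x y) :
    (w.edges.countP (crossB K)) % 2 = if K x = K y then 0 else 1 := by
  induction w with
  | nil => simp
  | @cons a b d h w ih =>
    rw [SimpleGraph.Walk.edges_cons, List.countP_cons]
    cases hab : K a <;> cases hbb : K b <;> cases hdb : K d <;>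
      simp_all [crossB_mk] <;> omega

lemma crossB_zero_const {V : Type*} {G : SimpleGraph V} {x y : V} (K : V → Bool)
    (w : G.Walk x y) (h0 : w.edges.countP (crossB K) = 0) :
    ∀ v ∈ w.support, K v = K x := by
  induction w with
  | nil => intro v hv; simp at hv; subst hv; rfl
  | @cons a b d h w ih =>
    rw [SimpleGraph.Walk.edges_cons, List.countP_cons] at h0
    have hcross : crossB K s(a, b) = false := by
      by_contra hcc
      simp only [Bool.not_eq_false] at hcc
      rw [hcc] at h0
      simp at h0
    have h0' : w.edges.countP (crossB K) = 0 := by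
      rw [hcross] at h0
      simpa using h0
    have hab : K a = K b := by
      rw [crossB_mk] at hcross
      cases ha : K a <;> cases hb2 : K b <;> simp_all
    intro v hv
    rw [SimpleGraph.Walk.support_cons] at hv
    rcases List.mem_cons.mp hv with rfl | hv
    · rfl
    · rw [ih h0' v hv, hab]

lemma two_crossings {V : Type*} {G : SimpleGraph V} {x : V} (K : V → Bool)
    (c : G.Walk x x) (p q : V) (hp : p ∈ c.support) (hq : q ∈ c.support)
    (hpq : K p ≠ K q) : 2 ≤ c.edges.countP (crossB K) := by
  have hpar := crossB_parity K c
  simp at hpar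
  rcases Nat.eq_zero_or_pos (c.edges.countP (crossB K)) with h0 | h1
  · exact absurd ((crossB_zero_const K c h0 p hp).trans
      (crossB_zero_const K c h0 q hq).symm) hpq
  · omega

/-- Membership of a vertex in the `A`-side component indexed by `i`. -/
def inCompA {Δ : ℕ} (i : Fin (Δ - 1)) : TV Δ → Bool
  | TV.A j => decide (i = j)
  | TV.u j => decide (i = j)
  | TV.v j => decide (i = j)
  | _ => false

/-- Membership of a vertex in the `C`-side component indexed by `i`. -/
def inCompC {Δ : ℕ} (i : Fin (Δ - 1)) : TV Δ → Bool
  | TV.C j => decide (i = j)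
  | TV.y j => decide (i = j)
  | TV.z j => decide (i = j)
  | _ => false

/-- Membership in the component indexed by `k`. -/
def inComp {Δ : ℕ} (k : Bool × Fin (Δ - 1)) : TV Δ → Bool :=
  if k.1 then inCompA k.2 else inCompC k.2

/-- The central vertex of the component `k`. -/
def hub {Δ : ℕ} (k : Bool × Fin (Δ - 1)) : TV Δ :=
  if k.1 then TV.A k.2 else TV.C k.2

/-- The vertex of `B` adjacent to the component `k`. -/
def anchor {Δ : ℕ} (k : Bool × Fin (Δ - 1)) : TV Δ :=
  if k.1 then TV.a else TV.c

lemma cross_structure {Δ m : ℕ} (k : Bool × Fin (Δ - 1)) {p q : TV Δ × Fin m}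
    (hadj : (Tgraph Δ □ pathGraph m).Adj p q)
    (hp : inComp k p.1 = true) (hq : inComp k q.1 = false) :
    p.1 = hub k ∧ q.1 = anchor k := by
  rcases SimpleGraph.boxProd_adj.mp hadj with ⟨hT, -⟩ | ⟨-, hfst⟩
  · rw [Tgraph, SimpleGraph.fromRel_adj] at hT
    obtain ⟨-, h⟩ := hT
    obtain ⟨kb, kj⟩ := k
    cases kb <;>
      (simp only [Trel] at h;
       rcases h with (⟨h1,h2⟩|⟨h1,h2⟩|⟨i,(⟨h1,h2⟩|⟨h1,h2⟩|⟨h1,h2⟩|⟨h1,h2⟩|⟨h1,h2⟩|⟨h1,h2⟩)⟩) |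
         (⟨h1,h2⟩|⟨h1,h2⟩|⟨i,(⟨h1,h2⟩|⟨h1,h2⟩|⟨h1,h2⟩|⟨h1,h2⟩|⟨h1,h2⟩|⟨h1,h2⟩)⟩) <;>
       simp_all [inComp, inCompA, inCompC, hub, anchor])
  · rw [hfst] at hp; rw [hp] at hq; exact absurd hq (by simp)

/-- If `C` is a hamiltonian cycle of `H = T_Δ □ Pₘ` with `m ≤ 4Δ − 3` that uses at
most `m − 2` edges having exactly one endvertex in `V(B) × {1,…,m}` (where
`B = {a, b, c}`), then we reach a contradiction: the cycle cannot visit all of the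
`2Δ − 2` components of `H − V(B) × {1,…,m}`. -/
theorem stmt13 (Δ : ℕ) (hΔ : 3 ≤ Δ) (m : ℕ) (hm1 : 1 ≤ m) (hm : m ≤ 4 * Δ - 3)
    (x : TV Δ × Fin m) (c : (Tgraph Δ □ pathGraph m).Walk x x)
    (hc : c.IsHamiltonianCycle)
    (hcross :
      {e ∈ c.edges | ∃ p q : TV Δ × Fin m, e = s(p, q) ∧
        p.1 ∈ ({TV.a, TV.b, TV.c} : Set (TV Δ)) ∧
        q.1 ∉ ({TV.a, TV.b, TV.c} : Set (TV Δ))}.ncard ≤ m - 2) :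
    False := by
  classical
  set S : Set (Sym2 (TV Δ × Fin m)) :=
    {e ∈ c.edges | ∃ p q : TV Δ × Fin m, e = s(p, q) ∧
        p.1 ∈ ({TV.a, TV.b, TV.c} : Set (TV Δ)) ∧
        q.1 ∉ ({TV.a, TV.b, TV.c} : Set (TV Δ))} with hS
  let K : Bool × Fin (Δ - 1) → (TV Δ × Fin m) → Bool := fun k p => inComp k p.1
  let F : Bool × Fin (Δ - 1) → Finset (Sym2 (TV Δ × Fin m)) :=
    fun k => (c.edges.filter (crossB (K k))).toFinset
  have hnodup := hc.isCycle.edges_nodup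
  -- each F k has at least 2 elements
  have hFcard : ∀ k, 2 ≤ (F k).card := by
    intro k
    have hlen : (F k).card = (c.edges.filter (crossB (K k))).length :=
      List.toFinset_card_of_nodup (hnodup.filter _)
    rw [hlen, ← List.countP_eq_length_filter]
    refine two_crossings (K k) c (hub k, ⟨0, hm1⟩) (TV.a, ⟨0, hm1⟩)
      (hc.mem_support _) (hc.mem_support _) ?_
    obtain ⟨kb, kj⟩ := k
    cases kb <;> simp [K, inComp, inCompA, inCompC, hub]
  -- structure of crossing edges
  have hstruct : ∀ k, ∀ e ∈ F k,
      ∃ P Q : TV Δ × Fin m, e = s(P, Q) ∧ P.1 = hub k ∧ Q.1 = anchor k := by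
    intro k e he
    rw [List.mem_toFinset, List.mem_filter] at he
    obtain ⟨hmem, hcr⟩ := he
    induction e using Sym2.inductionOn with
    | hf p q =>
      have hadj := c.adj_of_mem_edges hmem
      rw [crossB_mk] at hcr
      cases hKp : K k p <;> cases hKq : K k q
      · rw [hKp, hKq] at hcr; simp at hcr
      · obtain ⟨h1, h2⟩ := cross_structure k hadj.symm hKq hKp
        exact ⟨q, p, Sym2.eq_swap.symm, h1, h2⟩
      · obtain ⟨h1, h2⟩ := cross_structure k hadj hKp hKq
        exact ⟨p, q, rfl, h1, h2⟩
      · rw [hKp, hKq] at hcr; simp at hcr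
  have hub_ne_anchor : ∀ k k' : Bool × Fin (Δ - 1), hub k ≠ anchor k' := by
    rintro ⟨kb, kj⟩ ⟨kb', kj'⟩
    cases kb <;> cases kb' <;> simp [hub, anchor]
  have hub_inj : ∀ k k' : Bool × Fin (Δ - 1), hub k = hub k' → k = k' := by
    rintro ⟨kb, kj⟩ ⟨kb', kj'⟩ h
    cases kb <;> cases kb' <;> simp_all [hub]
  -- the F k are pairwise disjoint
  have hdisj : ∀ k ∈ (Finset.univ : Finset (Bool × Fin (Δ - 1))), ∀ k' ∈ Finset.univ,
      k ≠ k' → Disjoint (F k) (F k') := by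
    intro k _ k' _ hkk'
    rw [Finset.disjoint_left]
    intro e he he'
    obtain ⟨P, Q, rfl, hP, hQ⟩ := hstruct k e he
    obtain ⟨P', Q', heq, hP', hQ'⟩ := hstruct k' _ he'
    rw [Sym2.eq_iff] at heq
    rcases heq with ⟨h1, h2⟩ | ⟨h1, h2⟩
    · exact hkk' (hub_inj k k' (by rw [← hP, h1]; exact hP'))
    · exact hub_ne_anchor k k' (by rw [← hP, h1]; exact hQ')
  -- biUnion is contained in S
  have hsub : ↑((Finset.univ : Finset (Bool × Fin (Δ - 1))).biUnion F) ⊆ S := by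
    intro e he
    rw [Finset.coe_biUnion] at he
    simp only [Set.mem_iUnion, Finset.mem_coe] at he
    obtain ⟨k, -, hk⟩ := he
    have hmem : e ∈ c.edges := by
      rw [List.mem_toFinset, List.mem_filter] at hk; exact hk.1
    obtain ⟨P, Q, rfl, hP, hQ⟩ := hstruct k e hk
    refine ⟨hmem, Q, P, Sym2.eq_swap.symm, ?_, ?_⟩
    · rw [hQ]; obtain ⟨kb, kj⟩ := k; cases kb <;> simp [anchor]
    · rw [hP]; obtain ⟨kb, kj⟩ := k; cases kb <;> simp [hub]
  -- counting
  have hSfin : S.Finite :=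
    Set.Finite.subset c.edges.finite_toSet (fun e he => he.1)
  have hcount : ((Finset.univ : Finset (Bool × Fin (Δ - 1))).biUnion F).card ≤ S.ncard := by
    rw [← Set.ncard_coe_finset]
    exact Set.ncard_le_ncard hsub hSfin
  rw [Finset.card_biUnion hdisj] at hcount
  have hlow : (Finset.univ : Finset (Bool × Fin (Δ - 1))).card * 2 ≤
      ∑ k : Bool × Fin (Δ - 1), (F k).card := by
    simpa using Finset.card_nsmul_le_sum Finset.univ _ 2 (fun k _ => hFcard k)
  have hcardU : (Finset.univ : Finset (Bool × Fin (Δ - 1))).card = 2 * (Δ - 1) := by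
    simp [Finset.card_univ]
  rw [hcardU] at hlow
  omega
end

section
/- Let G and H be graphs where H has a vertex u of degree one, and let S ⊆ V(G) with A the set of isolated vertices of G − S satisfying |A| > 2|S|. Then G □ H has no 2-regular connected spanning subgraph. -/
open SimpleGraph

/-- Let `H` have a vertex `u` of degree one and let `S ⊆ V(G)` be such that the set `A`
of isolated vertices of `G − S` satisfies `|A| > 2|S|`.  Then `G □ H` has no connected
2-regular spanning subgraph (in particular no hamiltonian cycle). -/
theorem stmt18 {V W : Type*} [Fintype V] [Fintype W]
    (G : SimpleGraph V) (H : SimpleGraph W) (u : W) (hu : ∃! w : W, H.Adj u w)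
    (S : Set V) (A : Set V)
    (hA : A = {v : V | v ∉ S ∧ ∀ w, G.Adj v w → w ∈ S})
    (hcard : 2 * S.ncard < A.ncard) :
    ¬ ∃ F : SimpleGraph (V × W), F ≤ G.boxProd H ∧ F.Connected ∧
        ∀ p : V × W, (F.neighborSet p).ncard = 2 := by
  classical
  rintro ⟨F, hle, -, hdeg⟩
  obtain ⟨u', hu', huniq⟩ := hu
  have key : ∀ a ∈ A, ∃ s ∈ S, F.Adj (a, u) (s, u) := by
    intro a ha
    by_contra h
    push_neg at h
    have hsub : F.neighborSet (a, u) ⊆ {((a : V), u')} := by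
      intro p hp
      have hadj : F.Adj (a, u) p := hp
      have hbox : (G.boxProd H).Adj (a, u) p := hle hadj
      rw [boxProd_adj] at hbox
      rcases hbox with ⟨hG, hp2⟩ | ⟨hH, hp1⟩
      · rw [hA] at ha
        have hs : p.1 ∈ S := ha.2 p.1 hG
        exact absurd (show F.Adj (a, u) (p.1, u) by
          rwa [show ((p.1 : V), u) = p from Prod.ext rfl hp2]) (h p.1 hs)
      · have h2 : p.2 = u' := huniq p.2 hH
        simp only [Set.mem_singleton_iff]
        exact Prod.ext hp1.symm h2
    have hd := hdeg (a, u)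
    have hle1 : (F.neighborSet (a, u)).ncard ≤ 1 := by
      calc (F.neighborSet (a, u)).ncard
          ≤ ({((a : V), u')} : Set (V × W)).ncard :=
            Set.ncard_le_ncard hsub (Set.finite_singleton _)
        _ = 1 := Set.ncard_singleton _
    omega
  choose! f hfS hfadj using key
  set As := A.toFinset with hAs
  set Ss := S.toFinset with hSs
  have hmap : ∀ a ∈ As, f a ∈ Ss := by
    intro a ha
    rw [hSs, Set.mem_toFinset]
    exact hfS a (by rwa [hAs, Set.mem_toFinset] at ha)
  have hsum := Finset.card_eq_sum_card_fiberwise hmap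
  have hfiber : ∀ s ∈ Ss, (As.filter (fun a => f a = s)).card ≤ 2 := by
    intro s hs
    have h2 : (F.neighborSet (s, u)).ncard = 2 := hdeg (s, u)
    have hinj : Set.InjOn (fun a : V => ((a : V), u))
        ↑(As.filter (fun a => f a = s)) := fun x _ y _ hxy => congrArg Prod.fst hxy
    have hcardim : ((As.filter (fun a => f a = s)).image (fun a => ((a : V), u))).card
        = (As.filter (fun a => f a = s)).card :=
      Finset.card_image_of_injOn hinj
    have hsubset : (↑((As.filter (fun a => f a = s)).image (fun a => ((a : V), u))) : Set (V × W))
        ⊆ F.neighborSet (s, u) := by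
      intro p hp
      simp only [Finset.coe_image, Set.mem_image, Finset.mem_coe, Finset.mem_filter] at hp
      obtain ⟨a, ⟨haA, hfa⟩, hpe⟩ := hp
      have haA' : a ∈ A := by rwa [hAs, Set.mem_toFinset] at haA
      have : F.Adj (a, u) (s, u) := by
        have := hfadj a haA'
        rwa [hfa] at this
      rw [← hpe]
      exact this.symm
    have := Set.ncard_le_ncard hsubset (Set.toFinite _)
    rwa [Set.ncard_coe_finset, hcardim, h2] at this
  have hAle : As.card ≤ 2 * Ss.card := by
    rw [hsum]
    calc ∑ s ∈ Ss, (As.filter (fun a => f a = s)).card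
        ≤ ∑ _s ∈ Ss, 2 := Finset.sum_le_sum hfiber
      _ = 2 * Ss.card := by rw [Finset.sum_const, smul_eq_mul, mul_comm]
  rw [hAs, hSs, ← Set.ncard_eq_toFinset_card', ← Set.ncard_eq_toFinset_card'] at hAle
  omega
end
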